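/- arXiv:1512.00317 — 5 statements merged into one kernel-verified Lean document; each statement's English description precedes it below -/
import Mathlib

section
/- There is a constant c > 0 independent of M such that for every positive integer M > R and every (z_1,…,z_N) ∈ {−1,1}^N one has φ̃_M(z_1,…,z_N) ≥ φ_M(z_1,…,z_N) ≥ φ̃_M(z_1,…,z_N) − c/M. -/
open scoped Classical

noncomputable section

/-- Points of the cubic lattice `ℤ^d`. -/
abbrev Zd (d : ℕ) := Fin d → ℤ

namespace DP

variable {d T N : ℕ}

/-- One step of a `P^j`-path inside the phase `A_j = {k | J k = j}`. -/
def step (J : Zd d → ℕ) (P : ℕ → Zd d → Finset (Zd d)) (j : ℕ) (x y : Zd d) : Prop :=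
  J x = j ∧ J y = j ∧ y - x ∈ P j x

/-- `k` and `k'` are `P^j`-connected in `A_j`. -/
def conn (J : Zd d → ℕ) (P : ℕ → Zd d → Finset (Zd d)) (j : ℕ) (k k' : Zd d) : Prop :=
  J k = j ∧ Relation.ReflTransGen (step J P j) k k'

/-- The union of the infinite `P^j`-connected components of `A_j`;
under the uniqueness assumption below this is the component `C_j`. -/
def infComp (J : Zd d → ℕ) (P : ℕ → Zd d → Finset (Zd d)) (j : ℕ) : Set (Zd d) :=
  {k | J k = j ∧ {k' | conn J P j k k'}.Infinite}

/-- The data of a discrete double-porosity spin system: a `T`-periodic label function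
`J : ℤ^d → {0,1,…,N}` with phases `A_j = {J = j}`, finite interaction ranges `P j k`,
interaction coefficients `a` and a forcing term `g`, satisfying periodicity, symmetry,
coercivity on the hard phases, and uniqueness of the infinite component `C_j` of each
hard phase `A_j`, `1 ≤ j ≤ N`. -/
structure Setting (d T N : ℕ) where
  J : Zd d → ℕ
  P : ℕ → Zd d → Finset (Zd d)
  a : Zd d → Zd d → ℝ
  g : Zd d → ℝ → ℝ
  c : ℝ
  hc : 0 < c
  hJ : ∀ k, J k ≤ N
  J_per : ∀ (k m : Zd d), J (k + (T : ℤ) • m) = J k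
  P_zero : ∀ j k, (0 : Zd d) ∈ P j k
  P_per : ∀ j (k m : Zd d), P j (k + (T : ℤ) • m) = P j k
  P_symm : ∀ j (k i : Zd d), 1 ≤ j → J k = j → i ∈ P j k →
    J (k + i) = j ∧ -i ∈ P j (k + i)
  a_per : ∀ (k k' m : Zd d), a (k + (T : ℤ) • m) (k' + (T : ℤ) • m) = a k k'
  a_symm : ∀ k k', a k' k = a k k'
  a_coerc : ∀ j (k k' : Zd d), 1 ≤ j → j ≤ N → k ∈ infComp J P j →
    k' - k ∈ P j k → c ≤ a k k'
  g_per : ∀ (k m : Zd d) (s : ℝ), s = 1 ∨ s = -1 → g (k + (T : ℤ) • m) s = g k s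
  C_nonempty : ∀ j, 1 ≤ j → j ≤ N → (infComp J P j).Nonempty
  C_unique : ∀ j, 1 ≤ j → j ≤ N → ∀ k k', k ∈ infComp J P j → k' ∈ infComp J P j →
    conn J P j k k'

/-- The integer points of the cube `Q_M = [-M/2, M/2)^d`. -/
def Qc (d M : ℕ) : Finset (Zd d) :=
  Fintype.piFinset fun _ => Finset.Ico (-((M / 2 : ℕ) : ℤ)) (((M + 1) / 2 : ℕ) : ℤ)

/-- `(k,k')` is a weak bond, i.e. a member of `N_0`:
`k' - k ∈ P^0_k \ {0}` and `J(k)J(k') = 0` or `J(k) ≠ J(k')`. -/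
def weakBond (S : Setting d T N) (k k' : Zd d) : Prop :=
  k' - k ∈ S.P 0 k ∧ k' ≠ k ∧ (S.J k * S.J k' = 0 ∨ S.J k ≠ S.J k')

/-- The weak-interaction energy
`Σ_{(k,k') ∈ N_0(Q_M)} a_{kk'} (v_k - v_{k'})² + Σ_{k ∈ Z(Q_M)} g(k, v_k)`. -/
def energy (S : Setting d T N) (M : ℕ) (v : Zd d → ℝ) : ℝ :=
  (∑ p ∈ (Qc d M ×ˢ Qc d M).filter (fun p => weakBond S p.1 p.2),
      S.a p.1 p.2 * (v p.1 - v p.2) ^ 2)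
  + ∑ k ∈ Qc d M, S.g k (v k)

/-- One step of a `P^j`-path inside `A_j ∩ Q`. -/
def stepIn (S : Setting d T N) (j : ℕ) (Q : Set (Zd d)) (x y : Zd d) : Prop :=
  S.J x = j ∧ S.J y = j ∧ y - x ∈ S.P j x ∧ x ∈ Q ∧ y ∈ Q

/-- The admissible class `V_M(z_1,…,z_N)`: spin fields that are constant on each
`P^j`-connected component of `A_j ∩ Q_M` and equal to `z j` on `C_j ∩ Q_M`. -/
def Vset (S : Setting d T N) (M : ℕ) (z : ℕ → ℝ) : Set (Zd d → ℝ) :=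
  {v | (∀ k ∈ Qc d M, v k = 1 ∨ v k = -1)
    ∧ (∀ j, 1 ≤ j → j ≤ N → ∀ k k' : Zd d,
        Relation.ReflTransGen (stepIn S j (↑(Qc d M))) k k' → v k = v k')
    ∧ (∀ j, 1 ≤ j → j ≤ N → ∀ k ∈ Qc d M, k ∈ infComp S.J S.P j → v k = z j)}

/-- The interaction energy density
`φ_M(z) = M^{-d} min { energy(v) : v ∈ V_M(z) }`. -/
def phiM (S : Setting d T N) (M : ℕ) (z : ℕ → ℝ) : ℝ :=
  sInf (energy S M '' Vset S M z) / (M : ℝ) ^ d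

end DP

namespace DP

variable {d T N : ℕ}

/-- One step of a `P^j`-path inside `A_j \ C_j`. -/
def stepOut (S : Setting d T N) (j : ℕ) (x y : Zd d) : Prop :=
  S.J x = j ∧ S.J y = j ∧ y - x ∈ S.P j x ∧
    x ∉ infComp S.J S.P j ∧ y ∉ infComp S.J S.P j

/-- Euclidean length of a lattice vector. -/
def enorm' (x : Zd d) : ℝ := Real.sqrt (∑ i, ((x i : ℝ)) ^ 2)

/-- The set `{r | r = |k - k'|, k,k' ∈ A_j \ C_j P^j-connected, j = 1,…,N}`, whose
maximum is the constant `R`. -/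
def Rset (S : Setting d T N) : Set ℝ :=
  {r | ∃ (j : ℕ) (k k' : Zd d), 1 ≤ j ∧ j ≤ N ∧ S.J k = j ∧ k ∉ infComp S.J S.P j ∧
    Relation.ReflTransGen (stepOut S j) k k' ∧ r = enorm' (k - k')}

/-- Integer points of the real cube `[-r/2, r/2)^d`. -/
def QR (d : ℕ) (r : ℝ) : Set (Zd d) :=
  {k | ∀ i, -(r / 2) ≤ (k i : ℝ) ∧ (k i : ℝ) < r / 2}

/-- `D_M`: the union over `j = 1,…,N` of the `P^j`-connected components of `A_j \ C_j`
that do not intersect `Q_{M-R}`. -/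
def DM (S : Setting d T N) (R : ℝ) (M : ℕ) : Set (Zd d) :=
  {k | ∃ j, 1 ≤ j ∧ j ≤ N ∧ S.J k = j ∧ k ∉ infComp S.J S.P j ∧
    ∀ k', Relation.ReflTransGen (stepOut S j) k k' → k' ∉ QR d ((M : ℝ) - R)}

end DP

namespace DP

/-- The modified energy density `φ̃_M(z)`: the same minimum as `φ_M(z)` but restricted
to test functions `v` with `v_k = 1` for all `k ∈ D_M ∩ Q_M`. -/
noncomputable def phiTildeM {d T N : ℕ} (S : Setting d T N) (R : ℝ) (M : ℕ)
    (z : ℕ → ℝ) : ℝ :=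
  sInf (energy S M ''
    {v | v ∈ Vset S M z ∧ ∀ k ∈ Qc d M, k ∈ DM S R M → v k = 1}) / (M : ℝ) ^ d

end DP


namespace DP

variable {d T N : ℕ}

lemma step_symm (S : Setting d T N) {j : ℕ} (hj : 1 ≤ j) {x y : Zd d}
    (h : step S.J S.P j x y) : step S.J S.P j y x := by
  obtain ⟨hx, hy, hP⟩ := h
  have h2 := S.P_symm j x (y - x) hj hx hP
  have hxy : x + (y - x) = y := by abel
  rw [hxy] at h2
  refine ⟨hy, hx, ?_⟩
  rw [← neg_sub y x]
  exact h2.2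

lemma infComp_iff_of_step (S : Setting d T N) {j : ℕ} (hj : 1 ≤ j) {x y : Zd d}
    (h : step S.J S.P j x y) :
    (x ∈ infComp S.J S.P j ↔ y ∈ infComp S.J S.P j) := by
  have hsets : {k' | conn S.J S.P j x k'} = {k' | conn S.J S.P j y k'} := by
    ext k''
    constructor
    · rintro ⟨hJx, hp⟩
      exact ⟨h.2.1, Relation.ReflTransGen.head (step_symm S hj h) hp⟩
    · rintro ⟨hJy, hp⟩
      exact ⟨h.1, Relation.ReflTransGen.head h hp⟩
  constructor
  · rintro ⟨-, hinf⟩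
    exact ⟨h.2.1, hsets ▸ hinf⟩
  · rintro ⟨-, hinf⟩
    exact ⟨h.1, hsets.symm ▸ hinf⟩

lemma infComp_iff_of_rtg (S : Setting d T N) {j : ℕ} (hj : 1 ≤ j) {Q : Set (Zd d)} {x y : Zd d}
    (h : Relation.ReflTransGen (stepIn S j Q) x y) :
    (x ∈ infComp S.J S.P j ↔ y ∈ infComp S.J S.P j) := by
  induction h with
  | refl => exact Iff.rfl
  | tail _ hstep ih => exact ih.trans (infComp_iff_of_step S hj ⟨hstep.1, hstep.2.1, hstep.2.2.1⟩)

lemma DM_iff_of_stepIn (S : Setting d T N) {R : ℝ} {M : ℕ} {j : ℕ} (hj1 : 1 ≤ j)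
    {x y : Zd d} (h : stepIn S j (↑(Qc d M)) x y) :
    (x ∈ DM S R M ↔ y ∈ DM S R M) := by
  obtain ⟨hJx, hJy, hP, hxQ, hyQ⟩ := h
  have hstep : step S.J S.P j x y := ⟨hJx, hJy, hP⟩
  have hIff := infComp_iff_of_step S hj1 hstep
  constructor
  · rintro ⟨j', hj'1, hj'N, hJx', hxout, hall⟩
    have hjj : j' = j := by rw [← hJx', hJx]
    subst hjj
    have hyout : y ∉ infComp S.J S.P j' := fun hy => hxout (hIff.mpr hy)
    exact ⟨j', hj'1, hj'N, hJy, hyout, fun k' hp =>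
      hall k' (Relation.ReflTransGen.head ⟨hJx, hJy, hP, hxout, hyout⟩ hp)⟩
  · rintro ⟨j', hj'1, hj'N, hJy', hyout, hall⟩
    have hjj : j' = j := by rw [← hJy', hJy]
    subst hjj
    have hxout : x ∉ infComp S.J S.P j' := fun hx => hyout (hIff.mp hx)
    have hsym := step_symm S hj1 hstep
    exact ⟨j', hj'1, hj'N, hJx, hxout, fun k' hp =>
      hall k' (Relation.ReflTransGen.head ⟨hJy, hJx, hsym.2.2, hyout, hxout⟩ hp)⟩

lemma DM_iff_of_rtg (S : Setting d T N) {R : ℝ} {M : ℕ} {j : ℕ} (hj1 : 1 ≤ j)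
    {x y : Zd d} (h : Relation.ReflTransGen (stepIn S j (↑(Qc d M))) x y) :
    (x ∈ DM S R M ↔ y ∈ DM S R M) := by
  induction h with
  | refl => exact Iff.rfl
  | tail _ hstep ih => exact ih.trans (DM_iff_of_stepIn S hj1 hstep)

end DP

namespace DP

variable {d T N : ℕ}

/-- Reference test function. -/
noncomputable def vzero (S : Setting d T N) (z : ℕ → ℝ) : Zd d → ℝ :=
  fun k => if 1 ≤ S.J k ∧ k ∈ infComp S.J S.P (S.J k) then z (S.J k) else 1

lemma vzero_mem (S : Setting d T N) (M : ℕ) (z : ℕ → ℝ)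
    (hz : ∀ j, 1 ≤ j → j ≤ N → z j = 1 ∨ z j = -1) :
    vzero S z ∈ Vset S M z := by
  refine ⟨?_, ?_, ?_⟩
  · intro k _
    by_cases h : 1 ≤ S.J k ∧ k ∈ infComp S.J S.P (S.J k)
    · rw [vzero, if_pos h]
      exact hz _ h.1 (S.hJ k)
    · rw [vzero, if_neg h]
      exact Or.inl rfl
  · intro j hj1 hjN k k' hpath
    induction hpath with
    | refl => rfl
    | tail _ hstep ih =>
      rw [ih]
      rename_i b c _
      have hJb : S.J b = j := hstep.1
      have hJc : S.J c = j := hstep.2.1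
      have hIff := infComp_iff_of_step S hj1 (⟨hJb, hJc, hstep.2.2.1⟩ : step S.J S.P j b c)
      show (if 1 ≤ S.J b ∧ b ∈ infComp S.J S.P (S.J b) then z (S.J b) else 1)
        = (if 1 ≤ S.J c ∧ c ∈ infComp S.J S.P (S.J c) then z (S.J c) else 1)
      rw [hJb, hJc]
      by_cases hb : b ∈ infComp S.J S.P j
      · rw [if_pos ⟨hj1, hb⟩, if_pos ⟨hj1, hIff.mp hb⟩]
      · rw [if_neg (fun h => hb h.2), if_neg (fun h => hb (hIff.mpr h.2))]
  · intro j hj1 hjN k _ hC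
    have hJk : S.J k = j := hC.1
    show (if 1 ≤ S.J k ∧ k ∈ infComp S.J S.P (S.J k) then z (S.J k) else 1) = z j
    rw [hJk, if_pos ⟨hj1, hC⟩]

lemma vzero_one (S : Setting d T N) (R : ℝ) (M : ℕ) (z : ℕ → ℝ) :
    ∀ k ∈ Qc d M, k ∈ DM S R M → vzero S z k = 1 := by
  intro k _ hD
  obtain ⟨j, hj1, hjN, hJk, hout, -⟩ := hD
  rw [vzero]
  apply if_neg
  rintro ⟨-, h2⟩
  rw [hJk] at h2
  exact hout h2

/-- Modified test function, set to `1` on `D_M`. -/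
noncomputable def truncate (S : Setting d T N) (R : ℝ) (M : ℕ) (v : Zd d → ℝ) : Zd d → ℝ :=
  fun k => if k ∈ DM S R M then 1 else v k

lemma truncate_one (S : Setting d T N) (R : ℝ) (M : ℕ) (v : Zd d → ℝ) :
    ∀ k ∈ Qc d M, k ∈ DM S R M → truncate S R M v k = 1 := by
  intro k _ hD
  rw [truncate, if_pos hD]

lemma truncate_mem (S : Setting d T N) (R : ℝ) (M : ℕ) (z : ℕ → ℝ) (v : Zd d → ℝ)
    (hv : v ∈ Vset S M z) : truncate S R M v ∈ Vset S M z := by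
  obtain ⟨hval, hconst, hC⟩ := hv
  refine ⟨?_, ?_, ?_⟩
  · intro k hk
    by_cases h : k ∈ DM S R M
    · rw [truncate, if_pos h]; exact Or.inl rfl
    · rw [truncate, if_neg h]; exact hval k hk
  · intro j hj1 hjN k k' hpath
    have hIff := DM_iff_of_rtg S (R := R) hj1 hpath
    by_cases h : k ∈ DM S R M
    · simp only [truncate]
      rw [if_pos h, if_pos (hIff.mp h)]
    · simp only [truncate]
      rw [if_neg h, if_neg (fun h' => h (hIff.mpr h'))]
      exact hconst j hj1 hjN k k' hpath
  · intro j hj1 hjN k hk hCk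
    have hnD : k ∉ DM S R M := by
      rintro ⟨j', hj'1, hj'N, hJk', hout, -⟩
      rw [hCk.1] at hJk'
      subst hJk'
      exact hout hCk
    rw [truncate, if_neg hnD]
    exact hC j hj1 hjN k hk hCk

end DP

namespace DP

variable {d T N : ℕ}

/-- The fundamental period cell. -/
def cellF (d T : ℕ) : Finset (Zd d) :=
  Fintype.piFinset fun _ => Finset.Ico (0 : ℤ) (T : ℤ)

lemma cellF_nonempty (d : ℕ) {T : ℕ} (hT : 0 < T) : (cellF d T).Nonempty := by
  refine ⟨0, ?_⟩
  rw [cellF, Fintype.mem_piFinset]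
  intro i
  simp only [Pi.zero_apply, Finset.mem_Ico, le_refl, true_and]
  exact_mod_cast hT

lemma rep (S : Setting d T N) (hT : 0 < T) (k : Zd d) :
    ∃ k₀ ∈ cellF d T, S.P 0 k = S.P 0 k₀ ∧
      (∀ s : ℝ, s = 1 ∨ s = -1 → S.g k s = S.g k₀ s) ∧
      (∀ i : Zd d, S.a k (k + i) = S.a k₀ (k₀ + i)) := by
  set k₀ : Zd d := fun i => k i % (T : ℤ) with hk₀
  set m : Zd d := fun i => k i / (T : ℤ) with hm
  have hTpos : (0 : ℤ) < (T : ℤ) := by exact_mod_cast hT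
  have hk : k = k₀ + (T : ℤ) • m := by
    funext i
    simp only [Pi.add_apply, Pi.smul_apply, smul_eq_mul, hk₀, hm]
    rw [Int.emod_def]
    ring
  refine ⟨k₀, ?_, ?_, ?_, ?_⟩
  · rw [cellF, Fintype.mem_piFinset]
    intro i
    rw [Finset.mem_Ico]
    exact ⟨Int.emod_nonneg _ hTpos.ne', Int.emod_lt_of_pos _ hTpos⟩
  · rw [hk]
    exact S.P_per 0 k₀ m
  · intro s hs
    rw [hk]
    exact S.g_per k₀ m s hs
  · intro i
    have h1 : k + i = (k₀ + i) + (T : ℤ) • m := by rw [hk]; abel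
    rw [h1, hk]
    exact S.a_per k₀ (k₀ + i) m

/-- Counting lemma: the boundary layer has at most `C · M^(d-1)` points. -/
lemma card_layer {d : ℕ} (R : ℝ) (hR0 : 0 ≤ R) (M : ℕ) (hM : 0 < M) (hRM : R < M) :
    ((Qc d M).filter (fun k => k ∉ QR d ((M : ℝ) - R))).card
      ≤ d * ((2 * ⌈R⌉₊ + 4) * M ^ (d - 1)) := by
  classical
  set r0 : ℕ := ⌈R⌉₊ with hr0
  set lo : ℤ := -((M / 2 : ℕ) : ℤ) with hlo
  set hi : ℤ := (((M + 1) / 2 : ℕ) : ℤ) with hhi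
  have hQmem : ∀ k : Zd d, k ∈ Qc d M ↔ ∀ i, lo ≤ k i ∧ k i < hi := by
    intro k
    rw [Qc, Fintype.mem_piFinset]
    simp only [Finset.mem_Ico, hlo, hhi]
  set x : ℝ := ((M : ℝ) - R) / 2 with hx
  set badF : Finset ℤ :=
    (Finset.Ico lo hi).filter (fun t => ((t : ℤ) : ℝ) < -x ∨ x ≤ ((t : ℤ) : ℝ)) with hbadF
  have hRr : R ≤ (r0 : ℝ) := Nat.le_ceil R
  -- card of badF
  have hbadcard : badF.card ≤ 2 * r0 + 4 := by
    set l1 : ℤ := ⌈-x⌉ with hl1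
    set l2 : ℤ := ⌈x⌉ with hl2
    have hsub : badF ⊆ Finset.Ico lo l1 ∪ Finset.Ico l2 hi := by
      intro t ht
      rw [hbadF, Finset.mem_filter, Finset.mem_Ico] at ht
      rcases ht.2 with h | h
      · refine Finset.mem_union.mpr (Or.inl (Finset.mem_Ico.mpr ⟨ht.1.1, ?_⟩))
        have : (t : ℝ) < (l1 : ℝ) := lt_of_lt_of_le h (Int.le_ceil _)
        exact_mod_cast this
      · refine Finset.mem_union.mpr (Or.inr (Finset.mem_Ico.mpr ⟨?_, ht.1.2⟩))
        exact Int.ceil_le.mpr h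
    have hcast1 : ((M / 2 : ℕ) : ℝ) ≤ (M : ℝ) / 2 := by
      calc ((M / 2 : ℕ) : ℝ) ≤ (M : ℝ) / (2 : ℕ) := Nat.cast_div_le
        _ = (M : ℝ) / 2 := by norm_num
    have hcast2 : (((M + 1) / 2 : ℕ) : ℝ) ≤ ((M : ℝ) + 1) / 2 := by
      calc (((M + 1) / 2 : ℕ) : ℝ) ≤ ((M + 1 : ℕ) : ℝ) / (2 : ℕ) := Nat.cast_div_le
        _ = ((M : ℝ) + 1) / 2 := by push_cast; ring
    have c1 : (Finset.Ico lo l1).card ≤ r0 + 2 := by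
      rw [Int.card_Ico]
      rw [Int.toNat_le]
      have hreal : ((l1 : ℝ)) - (lo : ℝ) ≤ (r0 : ℝ) + 2 := by
        have h1 : (l1 : ℝ) < -x + 1 := Int.ceil_lt_add_one _
        have h2 : (lo : ℝ) = -((M / 2 : ℕ) : ℝ) := by rw [hlo, Int.cast_neg, Int.cast_natCast]
        have h3 : (0 : ℝ) ≤ (r0 : ℝ) := Nat.cast_nonneg r0
        rw [h2]
        rw [hx] at h1
        linarith
      have : ((l1 - lo : ℤ) : ℝ) ≤ (((r0 : ℤ) + 2 : ℤ) : ℝ) := by push_cast; push_cast at hreal; linarith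
      exact_mod_cast this
    have c2 : (Finset.Ico l2 hi).card ≤ r0 + 2 := by
      rw [Int.card_Ico]
      rw [Int.toNat_le]
      have hreal : ((hi : ℝ)) - (l2 : ℝ) ≤ (r0 : ℝ) + 2 := by
        have h1 : x ≤ (l2 : ℝ) := Int.le_ceil _
        have h2 : (hi : ℝ) = (((M + 1) / 2 : ℕ) : ℝ) := by rw [hhi, Int.cast_natCast]
        have h3 : (0 : ℝ) ≤ (r0 : ℝ) := Nat.cast_nonneg r0
        rw [h2]
        rw [hx] at h1
        linarith
      have : ((hi - l2 : ℤ) : ℝ) ≤ (((r0 : ℤ) + 2 : ℤ) : ℝ) := by push_cast; push_cast at hreal; linarith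
      exact_mod_cast this
    calc badF.card ≤ (Finset.Ico lo l1 ∪ Finset.Ico l2 hi).card := Finset.card_le_card hsub
      _ ≤ (Finset.Ico lo l1).card + (Finset.Ico l2 hi).card := Finset.card_union_le _ _
      _ ≤ 2 * r0 + 4 := by omega
  have hM0 : (Finset.Ico lo hi).card = M := by
    rw [Int.card_Ico]
    omega
  -- per coordinate bound
  have hTi : ∀ i : Fin d,
      ((Qc d M).filter (fun k => ((k i : ℤ) : ℝ) < -x ∨ x ≤ ((k i : ℤ) : ℝ))).card
        ≤ (2 * r0 + 4) * M ^ (d - 1) := by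
    intro i
    have hsub2 : (Qc d M).filter (fun k => ((k i : ℤ) : ℝ) < -x ∨ x ≤ ((k i : ℤ) : ℝ))
        ⊆ Fintype.piFinset (fun i' => if i' = i then badF else Finset.Ico lo hi) := by
      intro k hk
      rw [Finset.mem_filter] at hk
      rw [Fintype.mem_piFinset]
      intro i'
      by_cases hii : i' = i
      · subst hii
        rw [if_pos rfl, hbadF, Finset.mem_filter]
        exact ⟨Finset.mem_Ico.mpr ((hQmem k).mp hk.1 i'), hk.2⟩
      · rw [if_neg hii]
        exact Finset.mem_Ico.mpr ((hQmem k).mp hk.1 i')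
    calc ((Qc d M).filter _).card
        ≤ (Fintype.piFinset (fun i' => if i' = i then badF else Finset.Ico lo hi)).card :=
          Finset.card_le_card hsub2
      _ = ∏ i', (if i' = i then badF else Finset.Ico lo hi).card := by
          rw [Fintype.card_piFinset]
      _ = (if i = i then badF else Finset.Ico lo hi).card *
            ∏ i' ∈ Finset.univ.erase i, (if i' = i then badF else Finset.Ico lo hi).card := by
          exact (Finset.mul_prod_erase Finset.univ _ (Finset.mem_univ i)).symm
      _ = badF.card * M ^ (d - 1) := by
          rw [if_pos rfl]
          congr 1
          rw [Finset.prod_congr rfl (fun i' hi' => by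
            rw [if_neg (Finset.mem_erase.mp hi').1, hM0]), Finset.prod_const,
            Finset.card_erase_of_mem (Finset.mem_univ i), Finset.card_univ, Fintype.card_fin]
      _ ≤ (2 * r0 + 4) * M ^ (d - 1) := Nat.mul_le_mul_right _ hbadcard
  have hBsub : (Qc d M).filter (fun k => k ∉ QR d ((M : ℝ) - R)) ⊆
      Finset.univ.biUnion (fun i : Fin d =>
        (Qc d M).filter (fun k => ((k i : ℤ) : ℝ) < -x ∨ x ≤ ((k i : ℤ) : ℝ))) := by
    intro k hk
    rw [Finset.mem_filter] at hk
    have hnQR : ¬ (∀ i, -(((M : ℝ) - R) / 2) ≤ (k i : ℝ) ∧ (k i : ℝ) < ((M : ℝ) - R) / 2) := hk.2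
    push_neg at hnQR
    obtain ⟨i, hi⟩ := hnQR
    refine Finset.mem_biUnion.mpr ⟨i, Finset.mem_univ i, Finset.mem_filter.mpr ⟨hk.1, ?_⟩⟩
    by_cases hcase : ((k i : ℤ) : ℝ) < -x
    · exact Or.inl hcase
    · push_neg at hcase
      refine Or.inr ?_
      have := hi (by rw [hx] at hcase; linarith)
      rw [hx]
      linarith
  calc ((Qc d M).filter (fun k => k ∉ QR d ((M : ℝ) - R))).card
      ≤ (Finset.univ.biUnion (fun i : Fin d =>
          (Qc d M).filter (fun k => ((k i : ℤ) : ℝ) < -x ∨ x ≤ ((k i : ℤ) : ℝ)))).card :=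
        Finset.card_le_card hBsub
    _ ≤ ∑ i : Fin d, ((Qc d M).filter
          (fun k => ((k i : ℤ) : ℝ) < -x ∨ x ≤ ((k i : ℤ) : ℝ))).card :=
        Finset.card_biUnion_le
    _ ≤ ∑ _i : Fin d, (2 * r0 + 4) * M ^ (d - 1) := Finset.sum_le_sum (fun i _ => hTi i)
    _ = d * ((2 * r0 + 4) * M ^ (d - 1)) := by
        rw [Finset.sum_const, Finset.card_univ, Fintype.card_fin, smul_eq_mul]

end DP

open DP in
/-- there is a constant `c > 0` independent of `M` such that for every
positive integer `M > R` and every `z ∈ {-1,1}^N`,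
`φ̃_M(z) ≥ φ_M(z) ≥ φ̃_M(z) - c/M`. -/
theorem phiTilde_phi_estimate (d T N : ℕ) (hd : 0 < d) (hT : 0 < T) (hN : 0 < N)
    (S : Setting d T N) (R : ℝ) (hR : IsGreatest (Rset S) R) :
    ∃ c : ℝ, 0 < c ∧ ∀ (M : ℕ), 0 < M → R < M →
      ∀ z : ℕ → ℝ, (∀ j, 1 ≤ j → j ≤ N → z j = 1 ∨ z j = -1) →
        phiM S M z ≤ phiTildeM S R M z ∧
        phiTildeM S R M z - c / M ≤ phiM S M z := by
  classical
  obtain ⟨kc, hkc⟩ := cellF_nonempty d hT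
  set F : Finset ℝ := (cellF d T).biUnion
      (fun k₀ => (S.P 0 k₀).image (fun i => |S.a k₀ (k₀ + i)|)) with hF
  have hFne : F.Nonempty := ⟨|S.a kc (kc + 0)|,
    Finset.mem_biUnion.mpr ⟨kc, hkc, Finset.mem_image_of_mem _ (S.P_zero 0 kc)⟩⟩
  set Ca : ℝ := F.max' hFne with hCaDef
  have hCa0 : 0 ≤ Ca := le_trans (abs_nonneg _) (F.le_max' _
    (Finset.mem_biUnion.mpr ⟨kc, hkc, Finset.mem_image_of_mem _ (S.P_zero 0 kc)⟩))
  set G : Finset ℝ := (cellF d T).image (fun k₀ => |S.g k₀ 1| + |S.g k₀ (-1)|) with hG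
  have hGne : G.Nonempty := ⟨_, Finset.mem_image_of_mem _ hkc⟩
  set Cg : ℝ := G.max' hGne with hCgDef
  have hCg0 : 0 ≤ Cg := le_trans (by positivity) (G.le_max' _ (Finset.mem_image_of_mem _ hkc))
  set PA : Finset (Zd d) := (cellF d T).biUnion (fun k₀ => S.P 0 k₀) with hPAdef
  have habound : ∀ k k' : Zd d, weakBond S k k' → |S.a k k'| ≤ Ca ∧ k' - k ∈ PA := by
    intro k k' hw
    obtain ⟨k₀, hk₀, hP, hg, ha⟩ := rep S hT k
    have hP2 : k' - k ∈ S.P 0 k₀ := by rw [← hP]; exact hw.1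
    have hkk : k + (k' - k) = k' := by abel
    constructor
    · have h1 : S.a k k' = S.a k₀ (k₀ + (k' - k)) := by rw [← ha (k' - k), hkk]
      rw [h1]
      exact F.le_max' _ (Finset.mem_biUnion.mpr ⟨k₀, hk₀, Finset.mem_image_of_mem _ hP2⟩)
    · exact Finset.mem_biUnion.mpr ⟨k₀, hk₀, hP2⟩
  have hgbound : ∀ (k : Zd d) (s t : ℝ), s = 1 ∨ s = -1 → t = 1 ∨ t = -1 →
      S.g k s - S.g k t ≤ Cg ∧ -Cg ≤ S.g k s := by
    intro k s t hs ht
    obtain ⟨k₀, hk₀, -, hg, -⟩ := rep S hT k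
    have hb : |S.g k₀ 1| + |S.g k₀ (-1)| ≤ Cg := G.le_max' _ (Finset.mem_image_of_mem _ hk₀)
    rw [hg s hs, hg t ht]
    have e1 := le_abs_self (S.g k₀ 1); have e2 := neg_abs_le (S.g k₀ 1)
    have e3 := le_abs_self (S.g k₀ (-1)); have e4 := neg_abs_le (S.g k₀ (-1))
    have a1 := abs_nonneg (S.g k₀ 1); have a2 := abs_nonneg (S.g k₀ (-1))
    rcases hs with rfl | rfl <;> rcases ht with rfl | rfl <;> constructor <;> linarith
  have hR0 : 0 ≤ R := by
    obtain ⟨j, k, k', -, -, -, -, -, hr⟩ := hR.1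
    rw [hr]; exact Real.sqrt_nonneg _
  set r0 : ℕ := ⌈R⌉₊ with hr0
  set K : ℝ := 16 * Ca * PA.card + Cg with hK
  have hK0 : 0 ≤ K := by positivity
  clear_value F G Ca Cg PA K
  refine ⟨K * ((d : ℝ) * (2 * (r0 : ℝ) + 4)) + 1, ?_, ?_⟩
  · have h0 : (0:ℝ) ≤ K * ((d : ℝ) * (2 * (r0 : ℝ) + 4)) :=
      mul_nonneg hK0 (by positivity)
    linarith
  intro M hM hRM z hz
  simp only [phiM, phiTildeM]
  set bonds : Finset (Zd d × Zd d) :=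
    (Qc d M ×ˢ Qc d M).filter (fun p => weakBond S p.1 p.2) with hbonds
  have henergy_def : ∀ w : Zd d → ℝ, energy S M w =
      (∑ p ∈ bonds, S.a p.1 p.2 * (w p.1 - w p.2) ^ 2) + ∑ k ∈ Qc d M, S.g k (w k) :=
    fun w => rfl
  clear_value bonds
  have hsq : ∀ s t : ℝ, (s = 1 ∨ s = -1) → (t = 1 ∨ t = -1) → (s - t) ^ 2 ≤ 4 := by
    rintro s t (rfl | rfl) (rfl | rfl) <;> norm_num
  -- uniform lower bound
  have hLB : ∀ v ∈ Vset S M z,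
      ((∑ p ∈ bonds, -(4 * Ca)) + ∑ k ∈ Qc d M, -Cg) ≤ energy S M v := by
    intro v hv
    rw [henergy_def]
    refine add_le_add (Finset.sum_le_sum ?_) (Finset.sum_le_sum ?_)
    · intro p hp
      rw [hbonds, Finset.mem_filter] at hp
      obtain ⟨hpQ, hwb⟩ := hp
      rw [Finset.mem_product] at hpQ
      have habs := (habound p.1 p.2 hwb).1
      have h4 := hsq _ _ (hv.1 p.1 hpQ.1) (hv.1 p.2 hpQ.2)
      have h0 := sq_nonneg (v p.1 - v p.2)
      have key1 : |S.a p.1 p.2| * ((v p.1 - v p.2) ^ 2) ≤ Ca * 4 := mul_le_mul habs h4 h0 hCa0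
      have key2 : 0 ≤ (S.a p.1 p.2 + |S.a p.1 p.2|) * ((v p.1 - v p.2) ^ 2) :=
        mul_nonneg (by linarith [neg_abs_le (S.a p.1 p.2)]) h0
      nlinarith [key1, key2]
    · intro k hk
      exact (hgbound k (v k) (v k) (hv.1 k hk) (hv.1 k hk)).2
  have hBdd : BddBelow (energy S M '' Vset S M z) := by
    refine ⟨(∑ p ∈ bonds, -(4 * Ca)) + ∑ k ∈ Qc d M, -Cg, ?_⟩
    rintro y ⟨v, hv, rfl⟩
    exact hLB v hv
  have hsubset : (energy S M ''
      {v | v ∈ Vset S M z ∧ ∀ k ∈ Qc d M, k ∈ DM S R M → v k = 1})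
      ⊆ energy S M '' Vset S M z := Set.image_mono (fun v hv => hv.1)
  have hBdd2 : BddBelow (energy S M ''
      {v | v ∈ Vset S M z ∧ ∀ k ∈ Qc d M, k ∈ DM S R M → v k = 1}) := hBdd.mono hsubset
  have hv0 := vzero_mem S M z hz
  have hne1 : (energy S M '' Vset S M z).Nonempty := ⟨_, Set.mem_image_of_mem _ hv0⟩
  have hne2 : (energy S M ''
      {v | v ∈ Vset S M z ∧ ∀ k ∈ Qc d M, k ∈ DM S R M → v k = 1}).Nonempty :=
    ⟨_, Set.mem_image_of_mem _ ⟨hv0, vzero_one S R M z⟩⟩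
  have hI12 : sInf (energy S M '' Vset S M z) ≤ sInf (energy S M ''
      {v | v ∈ Vset S M z ∧ ∀ k ∈ Qc d M, k ∈ DM S R M → v k = 1}) :=
    csInf_le_csInf hBdd hne2 hsubset
  -- the boundary layer
  set B : Finset (Zd d) := (Qc d M).filter (fun k => k ∉ QR d ((M : ℝ) - R)) with hBdef
  have hDMB : ∀ k ∈ Qc d M, k ∈ DM S R M → k ∈ B := by
    intro k hk hD
    obtain ⟨j, -, -, -, -, hall⟩ := hD
    exact Finset.mem_filter.mpr ⟨hk, hall k Relation.ReflTransGen.refl⟩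
  clear_value B
  -- main energy estimate for the truncation
  have hkey : ∀ v ∈ Vset S M z,
      energy S M (truncate S R M v) ≤ energy S M v + K * B.card := by
    intro v hv
    have hwV := truncate_mem S R M z v hv
    have hweq : ∀ k, k ∉ DM S R M → truncate S R M v k = v k := fun k hk => if_neg hk
    set w : Zd d → ℝ := truncate S R M v with hwdef
    set touch : Finset (Zd d × Zd d) :=
      bonds.filter (fun p => p.1 ∈ DM S R M ∨ p.2 ∈ DM S R M) with htouchdef
    have hsum1 : ∑ p ∈ bonds, S.a p.1 p.2 * (w p.1 - w p.2) ^ 2 ≤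
        (∑ p ∈ bonds, S.a p.1 p.2 * (v p.1 - v p.2) ^ 2) + (touch.card : ℝ) * (8 * Ca) := by
      have hpt : ∀ p ∈ bonds, S.a p.1 p.2 * (w p.1 - w p.2) ^ 2 ≤
          S.a p.1 p.2 * (v p.1 - v p.2) ^ 2 +
            (if p.1 ∈ DM S R M ∨ p.2 ∈ DM S R M then 8 * Ca else 0) := by
        intro p hp
        rw [hbonds, Finset.mem_filter] at hp
        obtain ⟨hpQ, hwb⟩ := hp
        rw [Finset.mem_product] at hpQ
        by_cases hcase : p.1 ∈ DM S R M ∨ p.2 ∈ DM S R M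
        · rw [if_pos hcase]
          have habs := (habound p.1 p.2 hwb).1
          have h4w := hsq _ _ (hwV.1 p.1 hpQ.1) (hwV.1 p.2 hpQ.2)
          have h4v := hsq _ _ (hv.1 p.1 hpQ.1) (hv.1 p.2 hpQ.2)
          have h0w := sq_nonneg (w p.1 - w p.2)
          have h0v := sq_nonneg (v p.1 - v p.2)
          have key1 : |S.a p.1 p.2| * ((w p.1 - w p.2) ^ 2) ≤ Ca * 4 :=
            mul_le_mul habs h4w h0w hCa0
          have key1' : |S.a p.1 p.2| * ((v p.1 - v p.2) ^ 2) ≤ Ca * 4 :=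
            mul_le_mul habs h4v h0v hCa0
          have key2 : 0 ≤ (S.a p.1 p.2 + |S.a p.1 p.2|) * ((v p.1 - v p.2) ^ 2) :=
            mul_nonneg (by linarith [neg_abs_le (S.a p.1 p.2)]) h0v
          have key3 : 0 ≤ (|S.a p.1 p.2| - S.a p.1 p.2) * ((w p.1 - w p.2) ^ 2) :=
            mul_nonneg (by linarith [le_abs_self (S.a p.1 p.2)]) h0w
          nlinarith [key1, key1', key2, key3]
        · rw [if_neg hcase]
          push_neg at hcase
          rw [hweq p.1 hcase.1, hweq p.2 hcase.2, add_zero]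
      calc ∑ p ∈ bonds, S.a p.1 p.2 * (w p.1 - w p.2) ^ 2
          ≤ ∑ p ∈ bonds, (S.a p.1 p.2 * (v p.1 - v p.2) ^ 2 +
              (if p.1 ∈ DM S R M ∨ p.2 ∈ DM S R M then 8 * Ca else 0)) :=
            Finset.sum_le_sum hpt
        _ = (∑ p ∈ bonds, S.a p.1 p.2 * (v p.1 - v p.2) ^ 2) +
              ∑ p ∈ bonds, (if p.1 ∈ DM S R M ∨ p.2 ∈ DM S R M then 8 * Ca else 0) :=
            Finset.sum_add_distrib
        _ = _ := by
            rw [← Finset.sum_filter, Finset.sum_const, nsmul_eq_mul]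
    clear_value touch
    have hsum2 : ∑ k ∈ Qc d M, S.g k (w k) ≤ (∑ k ∈ Qc d M, S.g k (v k)) +
        (((Qc d M).filter (fun k => k ∈ DM S R M)).card : ℝ) * Cg := by
      have hpt : ∀ k ∈ Qc d M, S.g k (w k) ≤ S.g k (v k) + (if k ∈ DM S R M then Cg else 0) := by
        intro k hk
        by_cases hcase : k ∈ DM S R M
        · rw [if_pos hcase]
          have := (hgbound k (w k) (v k) (hwV.1 k hk) (hv.1 k hk)).1
          linarith
        · rw [if_neg hcase, hweq k hcase, add_zero]
      calc ∑ k ∈ Qc d M, S.g k (w k)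
          ≤ ∑ k ∈ Qc d M, (S.g k (v k) + (if k ∈ DM S R M then Cg else 0)) :=
            Finset.sum_le_sum hpt
        _ = (∑ k ∈ Qc d M, S.g k (v k)) + ∑ k ∈ Qc d M, (if k ∈ DM S R M then Cg else 0) :=
            Finset.sum_add_distrib
        _ = _ := by rw [← Finset.sum_filter, Finset.sum_const, nsmul_eq_mul]
    have hcard2 : ((Qc d M).filter (fun k => k ∈ DM S R M)).card ≤ B.card :=
      Finset.card_le_card (fun k hk =>
        hDMB k (Finset.mem_filter.mp hk).1 (Finset.mem_filter.mp hk).2)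
    have htouchcard : touch.card ≤ 2 * (B.card * PA.card) := by
      have hTC : touch.card ≤ (bonds.filter (fun p => p.1 ∈ DM S R M)).card +
          (bonds.filter (fun p => p.2 ∈ DM S R M)).card := by
        rw [htouchdef, Finset.filter_or]
        exact Finset.card_union_le _ _
      have h1 : (bonds.filter (fun p => p.1 ∈ DM S R M)).card ≤ (B ×ˢ PA).card := by
        apply Finset.card_le_card_of_injOn (fun p => (p.1, p.2 - p.1))
        · intro p hp
          rw [Finset.mem_coe, Finset.mem_filter] at hp
          obtain ⟨hpb, hpD⟩ := hp
          rw [hbonds, Finset.mem_filter] at hpb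
          obtain ⟨hpQ, hwb⟩ := hpb
          rw [Finset.mem_product] at hpQ
          exact Finset.mem_product.mpr ⟨hDMB p.1 hpQ.1 hpD, (habound p.1 p.2 hwb).2⟩
        · intro p _ q _ hpq
          have h1 := congrArg Prod.fst hpq
          have h2 := congrArg Prod.snd hpq
          simp only at h1 h2
          rw [h1] at h2
          exact Prod.ext h1 (sub_left_inj.mp h2)
      have h2 : (bonds.filter (fun p => p.2 ∈ DM S R M)).card ≤
          (B ×ˢ PA.image (fun i : Zd d => -i)).card := by
        apply Finset.card_le_card_of_injOn (fun p => (p.2, p.1 - p.2))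
        · intro p hp
          rw [Finset.mem_coe, Finset.mem_filter] at hp
          obtain ⟨hpb, hpD⟩ := hp
          rw [hbonds, Finset.mem_filter] at hpb
          obtain ⟨hpQ, hwb⟩ := hpb
          rw [Finset.mem_product] at hpQ
          refine Finset.mem_product.mpr ⟨hDMB p.2 hpQ.2 hpD, ?_⟩
          exact Finset.mem_image.mpr ⟨p.2 - p.1, (habound p.1 p.2 hwb).2, by rw [neg_sub]⟩
        · intro p _ q _ hpq
          have h1 := congrArg Prod.fst hpq
          have h2 := congrArg Prod.snd hpq
          simp only at h1 h2
          rw [h1] at h2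
          exact Prod.ext (sub_left_inj.mp h2) h1
      have h3 : (B ×ˢ PA).card = B.card * PA.card := Finset.card_product _ _
      have h4 : (B ×ˢ PA.image (fun i : Zd d => -i)).card ≤ B.card * PA.card := by
        rw [Finset.card_product]
        exact Nat.mul_le_mul_left _ Finset.card_image_le
      omega
    -- combine
    rw [henergy_def w, henergy_def v]
    have hc1 : (touch.card : ℝ) ≤ 2 * ((B.card : ℝ) * (PA.card : ℝ)) := by
      exact_mod_cast htouchcard
    have hc2 : (((Qc d M).filter (fun k => k ∈ DM S R M)).card : ℝ) ≤ (B.card : ℝ) := by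
      exact_mod_cast hcard2
    have hm1 : (touch.card : ℝ) * (8 * Ca) ≤ (2 * ((B.card : ℝ) * (PA.card : ℝ))) * (8 * Ca) :=
      mul_le_mul_of_nonneg_right hc1 (by positivity)
    have hm2 : (((Qc d M).filter (fun k => k ∈ DM S R M)).card : ℝ) * Cg ≤ (B.card : ℝ) * Cg :=
      mul_le_mul_of_nonneg_right hc2 hCg0
    have hm1' : (touch.card : ℝ) * (8 * Ca) ≤ 16 * Ca * (PA.card : ℝ) * (B.card : ℝ) := by
      calc (touch.card : ℝ) * (8 * Ca) ≤ (2 * ((B.card : ℝ) * (PA.card : ℝ))) * (8 * Ca) := hm1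
        _ = 16 * Ca * (PA.card : ℝ) * (B.card : ℝ) := by ring
    rw [hK]
    linarith [hsum1, hsum2, hm1', hm2]
  -- counting
  have hBcard : (B.card : ℝ) ≤ (d : ℝ) * ((2 * (r0 : ℝ) + 4) * (M : ℝ) ^ (d - 1)) := by
    have hcl := card_layer (d := d) R hR0 M hM hRM
    rw [hBdef, hr0]
    exact_mod_cast hcl
  have hMp : (0 : ℝ) ≤ (M : ℝ) ^ (d - 1) := by positivity
  have hKB : K * (B.card : ℝ) ≤
      (K * ((d : ℝ) * (2 * (r0 : ℝ) + 4)) + 1) * (M : ℝ) ^ (d - 1) := by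
    nlinarith [mul_le_mul_of_nonneg_left hBcard hK0, hMp]
  -- second inequality at the sInf level
  have hI2bound : sInf (energy S M ''
      {v | v ∈ Vset S M z ∧ ∀ k ∈ Qc d M, k ∈ DM S R M → v k = 1}) ≤
      sInf (energy S M '' Vset S M z) +
        (K * ((d : ℝ) * (2 * (r0 : ℝ) + 4)) + 1) * (M : ℝ) ^ (d - 1) := by
    have hlow : ∀ y ∈ energy S M '' Vset S M z,
        sInf (energy S M '' {v | v ∈ Vset S M z ∧ ∀ k ∈ Qc d M, k ∈ DM S R M → v k = 1}) -
          (K * ((d : ℝ) * (2 * (r0 : ℝ) + 4)) + 1) * (M : ℝ) ^ (d - 1) ≤ y := by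
      rintro y ⟨v, hv, rfl⟩
      have h1 : sInf (energy S M ''
          {v | v ∈ Vset S M z ∧ ∀ k ∈ Qc d M, k ∈ DM S R M → v k = 1}) ≤
          energy S M (truncate S R M v) :=
        csInf_le hBdd2 (Set.mem_image_of_mem _ ⟨truncate_mem S R M z v hv, truncate_one S R M v⟩)
      have h2 := hkey v hv
      linarith [hKB]
    have := le_csInf hne1 hlow
    linarith
  -- divide by M^d
  have hMd : (0 : ℝ) < (M : ℝ) ^ d := by positivity
  have hdivle : ∀ a b : ℝ, a ≤ b → a / (M : ℝ) ^ d ≤ b / (M : ℝ) ^ d := fun a b hab => by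
    rw [div_eq_mul_inv, div_eq_mul_inv]
    exact mul_le_mul_of_nonneg_right hab (inv_nonneg.mpr hMd.le)
  have hMne : (M : ℝ) ≠ 0 := Nat.cast_ne_zero.mpr hM.ne'
  have hp0 : (M : ℝ) ^ (d - 1) ≠ 0 := pow_ne_zero _ hMne
  have hd1 : d = (d - 1) + 1 := (Nat.succ_pred_eq_of_pos hd).symm
  have hpow : (M : ℝ) ^ d = (M : ℝ) ^ (d - 1) * (M : ℝ) := by
    conv_lhs => rw [hd1]
    rw [pow_succ]
  have hfrac : (K * ((d : ℝ) * (2 * (r0 : ℝ) + 4)) + 1) * (M : ℝ) ^ (d - 1) / (M : ℝ) ^ d =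
      (K * ((d : ℝ) * (2 * (r0 : ℝ) + 4)) + 1) / (M : ℝ) := by
    rw [hpow, mul_comm (K * ((d : ℝ) * (2 * (r0 : ℝ) + 4)) + 1) ((M : ℝ) ^ (d - 1)),
      mul_div_mul_left _ _ hp0]
  constructor
  · exact hdivle _ _ hI12
  · have h := hdivle _ _ hI2bound
    rw [add_div, hfrac] at h
    linarith
end
end

section
/- There exists a positive integer M such that for every j ∈ ℤ^d and every pair of points k, k' ∈ C ∩ Q_M(j) there is a P-path in C connecting k and k' that is entirely contained in Q'_{3M}(j). Here Q_M(j) = jM + {0,…,M−1}^d and Q'_{3M}(j) = ∪_{i ∈ ℤ^d, ‖i−j‖_∞ ≤ 1} Q_M(i). -/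
open scoped Classical

noncomputable section

namespace DP

/-- A nonempty `T`-periodic `P`-connected subset `C` of `ℤ^d`, with finite symmetric
`T`-periodic interaction ranges `P k ∋ 0`. -/
structure CSet (d T : ℕ) where
  C : Set (Zd d)
  P : Zd d → Finset (Zd d)
  C_ne : C.Nonempty
  C_per : ∀ (k m : Zd d), k + (T : ℤ) • m ∈ C ↔ k ∈ C
  P_zero : ∀ k, (0 : Zd d) ∈ P k
  P_per : ∀ (k m : Zd d), P (k + (T : ℤ) • m) = P k
  P_symm : ∀ k i, k ∈ C → i ∈ P k → k + i ∈ C ∧ -i ∈ P (k + i)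
  connected : ∀ k k', k ∈ C → k' ∈ C →
    Relation.ReflTransGen (fun x y => x ∈ C ∧ y ∈ C ∧ y - x ∈ P x) k k'

variable {d T : ℕ}

/-- One step of a `P`-path in `C`. -/
def cstep (S : CSet d T) (x y : Zd d) : Prop :=
  x ∈ S.C ∧ y ∈ S.C ∧ y - x ∈ S.P x

/-- The discrete cube `Q_M(j) = jM + {0,…,M-1}^d`. -/
def QM (d M : ℕ) (j : Zd d) : Set (Zd d) :=
  {k | ∀ i, (M : ℤ) * j i ≤ k i ∧ k i < (M : ℤ) * j i + M}

/-- The discrete cube `Q'_{3M}(j) = ∪_{‖i-j‖_∞ ≤ 1} Q_M(i)`. -/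
def Q3M (d M : ℕ) (j : Zd d) : Set (Zd d) :=
  {k | ∀ i, (M : ℤ) * j i - M ≤ k i ∧ k i < (M : ℤ) * j i + 2 * M}

/-- `k ∈ ℤ^d` belongs to the blown-up domain `(1/ε)Ω`. -/
def inSc (Ω : Set (Fin d → ℝ)) (ε : ℝ) (k : Zd d) : Prop :=
  (fun i => ε * (k i : ℝ)) ∈ Ω

end DP

namespace DP

variable {d T : ℕ}

/-- Bounded step relation. -/
def brel (S : CSet d T) (R : ℤ) (x y : Zd d) : Prop :=
  cstep S x y ∧ (∀ i, |x i| ≤ R) ∧ (∀ i, |y i| ≤ R)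

lemma brel_mono (S : CSet d T) {R R' : ℤ} (h : R ≤ R') {x y : Zd d} (hb : brel S R x y) :
    brel S R' x y :=
  ⟨hb.1, fun i => (hb.2.1 i).trans h, fun i => (hb.2.2 i).trans h⟩

lemma cstep_translate (S : CSet d T) (m : Zd d) {x y : Zd d} (h : cstep S x y) :
    cstep S (x + (T:ℤ) • m) (y + (T:ℤ) • m) := by
  obtain ⟨hx, hy, hp⟩ := h
  refine ⟨(S.C_per x m).2 hx, (S.C_per y m).2 hy, ?_⟩
  rw [S.P_per]
  have e : y + (T:ℤ) • m - (x + (T:ℤ) • m) = y - x := by abel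
  rw [e]; exact hp

lemma exists_bounded (S : CSet d T) {x y : Zd d}
    (h : Relation.ReflTransGen (cstep S) x y) :
    ∃ R : ℤ, 0 ≤ R ∧ Relation.ReflTransGen (brel S R) x y := by
  induction h with
  | refl =>
      exact ⟨∑ i, |x i|, Finset.sum_nonneg fun i _ => abs_nonneg _, .refl⟩
  | @tail b c hab hbc ih =>
      obtain ⟨R, hR0, hp⟩ := ih
      refine ⟨max R (max (∑ i, |b i|) (∑ i, |c i|)), le_trans hR0 (le_max_left _ _), ?_⟩
      refine Relation.ReflTransGen.tail
        (Relation.ReflTransGen.mono (fun a b' h => brel_mono S (le_max_left _ _) h) _ _ hp) ?_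
      exact ⟨hbc,
        fun i => le_trans (Finset.single_le_sum (fun i _ => abs_nonneg (b i)) (Finset.mem_univ i))
          (le_trans (le_max_left _ _) (le_max_right _ _)),
        fun i => le_trans (Finset.single_le_sum (fun i _ => abs_nonneg (c i)) (Finset.mem_univ i))
          (le_trans (le_max_right _ _) (le_max_right _ _))⟩

lemma path_translate (S : CSet d T) (hT : 0 < T) (R : ℤ) (M : ℕ)
    (hM : (M:ℤ) = R + T) (j mm : Zd d)
    (hmm : ∀ i, (M:ℤ) * j i - T < (T:ℤ) * mm i ∧ (T:ℤ) * mm i < (M:ℤ) * j i + M)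
    {x y : Zd d}
    (h : Relation.ReflTransGen (brel S R) x y) :
    Relation.ReflTransGen
      (fun a b => cstep S a b ∧ a ∈ Q3M d M j ∧ b ∈ Q3M d M j)
      (x + (T:ℤ) • mm) (y + (T:ℤ) • mm) := by
  have key : ∀ z : Zd d, (∀ i, |z i| ≤ R) → z + (T:ℤ) • mm ∈ Q3M d M j := by
    intro z hz
    simp only [Q3M, Set.mem_setOf_eq]
    intro i
    have h1 := (abs_le.mp (hz i)).1
    have h2 := (abs_le.mp (hz i)).2
    have h3 := (hmm i).1
    have h4 := (hmm i).2
    have hTpos : (1:ℤ) ≤ (T:ℤ) := by exact_mod_cast hT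
    simp only [Pi.add_apply, Pi.smul_apply, smul_eq_mul]
    constructor <;> linarith
  refine Relation.ReflTransGen.lift (fun z => z + (T:ℤ) • mm) ?_ _ _ h
  rintro a b ⟨hab, ha, hb⟩
  exact ⟨cstep_translate S mm hab, key a ha, key b hb⟩

lemma sum_step {d : ℕ} (mm m' : Zd d) (s : Fin d) (c : ℤ)
    (h : ((mm s + c) - m' s).natAbs + 1 = ((mm s) - m' s).natAbs) :
    (∑ i, ((mm + (Pi.single s c : Zd d)) i - m' i).natAbs) + 1
      = ∑ i, (mm i - m' i).natAbs := by
  have hfun : (fun i => ((mm + (Pi.single s c : Zd d)) i - m' i).natAbs)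
      = Function.update (fun i => (mm i - m' i).natAbs) s ((mm s + c - m' s).natAbs) := by
    funext i
    by_cases hi : i = s
    · subst hi; simp
    · simp [Function.update_of_ne hi, Pi.single_eq_of_ne hi]
  calc (∑ i, ((mm + (Pi.single s c : Zd d)) i - m' i).natAbs) + 1
      = (∑ i, Function.update (fun i => (mm i - m' i).natAbs) s ((mm s + c - m' s).natAbs) i) + 1 := by
        rw [← hfun]
    _ = ((mm s + c - m' s).natAbs + ∑ i ∈ Finset.univ \ {s}, (mm i - m' i).natAbs) + 1 := by
        rw [Finset.sum_update_of_mem (Finset.mem_univ s)]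
    _ = (mm s - m' s).natAbs + ∑ i ∈ Finset.univ \ {s}, (mm i - m' i).natAbs := by omega
    _ = ∑ i, (mm i - m' i).natAbs := by
        rw [Finset.sdiff_singleton_eq_erase]
        exact Finset.add_sum_erase _ (fun i => (mm i - m' i).natAbs) (Finset.mem_univ s)

end DP


open DP in
/-- there exists a positive integer `M` such that any two points of
`C ∩ Q_M(j)` are joined by a `P`-path in `C` entirely contained in `Q'_{3M}(j)`. -/
theorem exists_M_local_connectivity (d T : ℕ) (hd : 0 < d) (hT : 0 < T)
    (S : CSet d T) :
    ∃ M : ℕ, 0 < M ∧ ∀ (j k k' : Zd d),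
      k ∈ S.C → k ∈ QM d M j → k' ∈ S.C → k' ∈ QM d M j →
      Relation.ReflTransGen
        (fun x y => cstep S x y ∧ x ∈ Q3M d M j ∧ y ∈ Q3M d M j) k k' := by
  classical
  set Tz : ℤ := (T : ℤ) with hTzdef
  have hTz : 0 < Tz := by rw [hTzdef]; exact_mod_cast hT
  -- the fundamental domain
  set B : Finset (Zd d) :=
    (Finset.Icc (0 : Zd d) (fun _ => Tz - 1)).filter (· ∈ S.C) with hBdef
  -- the finitely many pairs we need bounded paths for
  set Pairs : Finset (Zd d × Zd d) :=
    ((B ×ˢ B) ∪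
      B.biUnion (fun x => Finset.univ.image
        (fun s : Fin d => (x, x + Tz • (Pi.single s (1:ℤ) : Zd d))))) ∪
      B.biUnion (fun x => Finset.univ.image
        (fun s : Fin d => (x, x + Tz • (Pi.single s (-1:ℤ) : Zd d)))) with hPairsdef
  have hBC : ∀ x ∈ B, x ∈ S.C := by
    intro x hx
    simp only [hBdef, Finset.mem_filter] at hx
    exact hx.2
  have hPC : ∀ p ∈ Pairs, p.1 ∈ S.C ∧ p.2 ∈ S.C := by
    intro p hp
    simp only [hPairsdef, Finset.mem_union, Finset.mem_product, Finset.mem_biUnion,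
      Finset.mem_image, Finset.mem_univ, true_and] at hp
    rcases hp with (⟨h1, h2⟩ | ⟨x, hx, s, hps⟩) | ⟨x, hx, s, hps⟩
    · exact ⟨hBC _ h1, hBC _ h2⟩
    · rw [← hps]
      exact ⟨hBC _ hx, (S.C_per x (Pi.single s (1:ℤ))).2 (hBC _ hx)⟩
    · rw [← hps]
      exact ⟨hBC _ hx, (S.C_per x (Pi.single s (-1:ℤ))).2 (hBC _ hx)⟩
  have exb : ∀ p : Zd d × Zd d, p.1 ∈ S.C → p.2 ∈ S.C →
      ∃ R : ℤ, 0 ≤ R ∧ Relation.ReflTransGen (brel S R) p.1 p.2 :=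
    fun p h1 h2 => exists_bounded S (S.connected _ _ h1 h2)
  set g : Zd d × Zd d → ℕ := fun p =>
    if h : p.1 ∈ S.C ∧ p.2 ∈ S.C then (Classical.choose (exb p h.1 h.2)).toNat else 0
    with hgdef
  set R0 : ℕ := Pairs.sup g with hR0def
  have hP : ∀ p ∈ Pairs, Relation.ReflTransGen (brel S (R0 : ℤ)) p.1 p.2 := by
    intro p hp
    obtain ⟨h1, h2⟩ := hPC p hp
    obtain ⟨hRnn, hpath⟩ := Classical.choose_spec (exb p h1 h2)
    refine Relation.ReflTransGen.mono (fun a b h => brel_mono S ?_ h) _ _ hpath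
    have hg : g p = (Classical.choose (exb p h1 h2)).toNat := by
      simp only [hgdef]
      rw [dif_pos ⟨h1, h2⟩]
    have h1' : Classical.choose (exb p h1 h2) ≤ (g p : ℤ) := by
      rw [hg]; exact Int.self_le_toNat _
    have h2' : (g p : ℤ) ≤ (R0 : ℤ) := by
      exact_mod_cast Finset.le_sup (f := g) hp
    exact h1'.trans h2'
  refine ⟨R0 + T, by omega, ?_⟩
  set M : ℕ := R0 + T with hMdef
  have hM : (M : ℤ) = (R0 : ℤ) + Tz := by simp [hMdef, hTzdef]
  intro j k k' hkC hkQ hk'C hk'Q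
  -- decompose k and k'
  set m : Zd d := fun i => k i / Tz with hmdef
  set k0 : Zd d := fun i => k i % Tz with hk0def
  set m' : Zd d := fun i => k' i / Tz with hm'def
  set k0' : Zd d := fun i => k' i % Tz with hk0'def
  have hkdec : k = k0 + Tz • m := by
    funext i
    simp only [Pi.add_apply, Pi.smul_apply, smul_eq_mul, hk0def, hmdef]
    exact (Int.emod_add_mul_ediv (k i) Tz).symm
  have hk'dec : k' = k0' + Tz • m' := by
    funext i
    simp only [Pi.add_apply, Pi.smul_apply, smul_eq_mul, hk0'def, hm'def]
    exact (Int.emod_add_mul_ediv (k' i) Tz).symm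
  have hk0r : ∀ i, 0 ≤ k0 i ∧ k0 i < Tz := fun i =>
    ⟨Int.emod_nonneg _ (ne_of_gt hTz), Int.emod_lt_of_pos _ hTz⟩
  have hk0'r : ∀ i, 0 ≤ k0' i ∧ k0' i < Tz := fun i =>
    ⟨Int.emod_nonneg _ (ne_of_gt hTz), Int.emod_lt_of_pos _ hTz⟩
  have hk0C : k0 ∈ S.C := by
    refine (S.C_per k0 m).1 ?_
    rw [← hkdec]; exact hkC
  have hk0'C : k0' ∈ S.C := by
    refine (S.C_per k0' m').1 ?_
    rw [← hk'dec]; exact hk'C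
  have hk0B : k0 ∈ B := by
    simp only [hBdef, Finset.mem_filter, Finset.mem_Icc]
    exact ⟨⟨fun i => (hk0r i).1, fun i => by show k0 i ≤ Tz - 1; have := (hk0r i).2; omega⟩, hk0C⟩
  have hk0'B : k0' ∈ B := by
    simp only [hBdef, Finset.mem_filter, Finset.mem_Icc]
    exact ⟨⟨fun i => (hk0'r i).1, fun i => by show k0' i ≤ Tz - 1; have := (hk0'r i).2; omega⟩, hk0'C⟩
  have hkQ' : ∀ i, (M:ℤ) * j i ≤ k i ∧ k i < (M:ℤ) * j i + M := hkQ
  have hk'Q' : ∀ i, (M:ℤ) * j i ≤ k' i ∧ k' i < (M:ℤ) * j i + M := hk'Q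
  have hTzm : ∀ i, Tz * m i = k i - k0 i := by
    intro i
    have := Int.emod_add_mul_ediv (k i) Tz
    simp only [hk0def, hmdef]
    omega
  have hTzm' : ∀ i, Tz * m' i = k' i - k0' i := by
    intro i
    have := Int.emod_add_mul_ediv (k' i) Tz
    simp only [hk0'def, hm'def]
    omega
  have hm : ∀ i, (M:ℤ) * j i - Tz < Tz * m i ∧ Tz * m i < (M:ℤ) * j i + M := by
    intro i
    have h1 := (hkQ' i).1
    have h2 := (hkQ' i).2
    have h3 := (hk0r i).1
    have h4 := (hk0r i).2
    rw [hTzm i]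
    constructor <;> linarith
  have hm' : ∀ i, (M:ℤ) * j i - Tz < Tz * m' i ∧ Tz * m' i < (M:ℤ) * j i + M := by
    intro i
    have h1 := (hk'Q' i).1
    have h2 := (hk'Q' i).2
    have h3 := (hk0'r i).1
    have h4 := (hk0'r i).2
    rw [hTzm' i]
    constructor <;> linarith
  -- step 2: move the base point from m to m'
  have claim : ∀ n : ℕ, ∀ mm : Zd d,
      (∀ i, (M:ℤ) * j i - Tz < Tz * mm i ∧ Tz * mm i < (M:ℤ) * j i + M) →
      (∑ i, (mm i - m' i).natAbs) = n →
      Relation.ReflTransGen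
        (fun x y => cstep S x y ∧ x ∈ Q3M d M j ∧ y ∈ Q3M d M j)
        (k0' + Tz • mm) (k0' + Tz • m') := by
    intro n
    induction n with
    | zero =>
        intro mm _ hsum
        have heq : mm = m' := by
          funext i
          have h0 : (mm i - m' i).natAbs = 0 :=
            Finset.sum_eq_zero_iff.mp hsum i (Finset.mem_univ i)
          omega
        rw [heq]
    | succ n ih =>
        intro mm hmm hsum
        have hex : ∃ s, mm s ≠ m' s := by
          by_contra hcon
          push_neg at hcon
          have hz : ∀ i ∈ Finset.univ, (mm i - m' i).natAbs = 0 := fun i _ => by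
            have := hcon i; omega
          rw [Finset.sum_eq_zero hz] at hsum
          omega
        obtain ⟨s, hs⟩ := hex
        have hc : ∃ c : ℤ, (c = 1 ∨ c = -1) ∧
            ((mm s + c) - m' s).natAbs + 1 = ((mm s) - m' s).natAbs ∧
            ((mm s < m' s ∧ c = 1) ∨ (m' s < mm s ∧ c = -1)) := by
          rcases lt_or_gt_of_ne hs with hlt | hgt
          · exact ⟨1, Or.inl rfl, by omega, Or.inl ⟨hlt, rfl⟩⟩
          · exact ⟨-1, Or.inr rfl, by omega, Or.inr ⟨hgt, rfl⟩⟩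
        obtain ⟨c, hc1, hcabs, hcdir⟩ := hc
        set mm2 : Zd d := mm + (Pi.single s c : Zd d) with hmm2def
        -- new bounds
        have hmm2 : ∀ i, (M:ℤ) * j i - Tz < Tz * mm2 i ∧ Tz * mm2 i < (M:ℤ) * j i + M := by
          intro i
          by_cases hi : i = s
          · subst hi
            have hval : mm2 i = mm i + c := by simp [hmm2def]
            rw [hval]
            rcases hcdir with ⟨hlt, hc⟩ | ⟨hgt, hc⟩
            · subst hc
              have hle : mm i + 1 ≤ m' i := by omega
              have := mul_le_mul_of_nonneg_left hle hTz.le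
              have h1 := (hmm i).1
              have h2 := (hm' i).2
              constructor <;> nlinarith
            · subst hc
              have hle : m' i ≤ mm i - 1 := by omega
              have : Tz * m' i ≤ Tz * (mm i - 1) := mul_le_mul_of_nonneg_left (by omega) hTz.le
              have h1 := (hm' i).1
              have h2 := (hmm i).2
              constructor <;> nlinarith
          · have hval : mm2 i = mm i := by simp [hmm2def, Pi.single_eq_of_ne hi]
            rw [hval]; exact hmm i
        have hsum2 : (∑ i, (mm2 i - m' i).natAbs) = n := by
          have := sum_step mm m' s c hcabs
          simp only [← hmm2def] at this
          omega
        -- the pair is in Pairs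
        have hpair : (k0', k0' + Tz • (Pi.single s c : Zd d)) ∈ Pairs := by
          rcases hc1 with hc | hc
          · subst hc
            simp only [hPairsdef, Finset.mem_union, Finset.mem_biUnion, Finset.mem_image,
              Finset.mem_univ, true_and]
            exact Or.inl (Or.inr ⟨k0', hk0'B, s, rfl⟩)
          · subst hc
            simp only [hPairsdef, Finset.mem_union, Finset.mem_biUnion, Finset.mem_image,
              Finset.mem_univ, true_and]
            exact Or.inr ⟨k0', hk0'B, s, rfl⟩
        have hpath := path_translate S hT (R0:ℤ) M hM j mm hmm (hP _ hpair)
        have hend : (k0' + Tz • (Pi.single s c : Zd d)) + Tz • mm = k0' + Tz • mm2 := by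
          simp only [hmm2def, smul_add]
          abel
        rw [hend] at hpath
        exact hpath.trans (ih mm2 hmm2 hsum2)
  -- step 1: connect k0 + Tz•m to k0' + Tz•m, then apply the claim
  have hpair1 : (k0, k0') ∈ Pairs := by
    simp only [hPairsdef, Finset.mem_union, Finset.mem_product]
    exact Or.inl (Or.inl ⟨hk0B, hk0'B⟩)
  have hpath1 := path_translate S hT (R0:ℤ) M hM j m hm (hP _ hpair1)
  rw [hkdec, hk'dec]
  exact hpath1.trans (claim _ m hm rfl)
end
end

section
/- Let M be a positive integer such that any two points of C lying in a common cube Q_M(j) are joined by a P-path in C contained in Q'_{3M}(j). Let Ω ⊂ ℝ^d be open and bounded, let ε > 0, let u : ℤ^d ∩ (1/ε)Ω → {−1,1}, and suppose ε^{d−1} · #{(k,k') : k,k' ∈ C ∩ (1/ε)Ω, k'−k ∈ P_k, u_k ≠ u_{k'}} ≤ K. Define S_ε = {j ∈ ℤ^d : Q'_{3M}(j) ⊂ (1/ε)Ω and u is not constant on C ∩ Q_M(j)}. Then #S_ε ≤ 3^d K ε^{1−d}. -/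
open scoped Classical

noncomputable section

section Aux

open DP

lemma exists_change {α β : Type*} {r : α → α → Prop} {u : α → β} {a b : α}
    (h : Relation.ReflTransGen r a b) (hne : u a ≠ u b) :
    ∃ x y, r x y ∧ u x ≠ u y := by
  induction h with
  | refl => exact absurd rfl hne
  | @tail b c hab hbc ih =>
    by_cases hb : u b = u c
    · exact ih (hb ▸ hne)
    · exact ⟨b, c, hbc, hb⟩

lemma finite_inSc {d : ℕ} {Ω : Set (Fin d → ℝ)} (hΩb : Bornology.IsBounded Ω)
    {ε : ℝ} (hε : 0 < ε) : {x : Zd d | inSc Ω ε x}.Finite := by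
  obtain ⟨R, hR⟩ := hΩb.subset_closedBall 0
  have : {x : Zd d | inSc Ω ε x} ⊆
      Set.pi Set.univ (fun _ => Set.Icc (-⌈R / ε⌉) ⌈R / ε⌉) := by
    intro x hx
    intro i _
    have hmem : (fun i => ε * (x i : ℝ)) ∈ Metric.closedBall (0 : Fin d → ℝ) R := hR hx
    have hnorm : ‖(fun i => ε * (x i : ℝ))‖ ≤ R := by
      simpa [Metric.mem_closedBall, dist_zero_right] using hmem
    have hi : |ε| * |(x i : ℝ)| ≤ R := by
      have := norm_le_pi_norm (fun i => ε * (x i : ℝ)) i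
      simpa [Real.norm_eq_abs, abs_mul] using this.trans hnorm
    have habs : |(x i : ℝ)| ≤ R / ε := by
      rw [abs_of_pos hε] at hi
      rw [le_div_iff₀ hε]
      linarith [hi]
    rw [abs_le] at habs
    constructor
    · have h1 : (-⌈R / ε⌉ : ℝ) ≤ (x i : ℝ) := by
        have := Int.le_ceil (R / ε)
        push_cast
        linarith [habs.1]
      exact_mod_cast h1
    · have h2 : ((x i : ℝ)) ≤ (⌈R / ε⌉ : ℝ) := habs.2.trans (Int.le_ceil _)
      exact_mod_cast h2
  exact Set.Finite.subset (Set.Finite.pi fun _ => Set.finite_Icc _ _) this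

lemma cube_mem {d M : ℕ} (hM : 0 < M) {x j : Zd d} (hx : x ∈ Q3M d M j) :
    j ∈ Fintype.piFinset fun i => Finset.Icc (x i / (M : ℤ) - 1) (x i / (M : ℤ) + 1) := by
  rw [Fintype.mem_piFinset]
  intro i
  obtain ⟨h1, h2⟩ := hx i
  have hM' : (0 : ℤ) < (M : ℤ) := by exact_mod_cast hM
  rw [Finset.mem_Icc]
  constructor
  · -- x i / M - 1 ≤ j i  ←  x i / M < j i + 2  ←  x i < (j i + 2) * M
    have : x i / (M : ℤ) < j i + 2 := by
      rw [Int.ediv_lt_iff_lt_mul hM']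
      linarith [h2]
    omega
  · -- j i ≤ x i / M + 1  ←  j i - 1 ≤ x i / M  ←  (j i - 1) * M ≤ x i
    have : j i - 1 ≤ x i / (M : ℤ) := by
      rw [Int.le_ediv_iff_mul_le hM']
      linarith [h1]
    omega

end Aux

open DP in
/-- if any two points of `C` in a common cube `Q_M(j)` are joined by a
`P`-path in `C` contained in `Q'_{3M}(j)`, `Ω` is open and bounded, and
`ε^{d-1} #{(k,k') : k,k' ∈ C ∩ (1/ε)Ω, k'-k ∈ P_k, u_k ≠ u_{k'}} ≤ K`, then
`#S_ε ≤ 3^d K ε^{1-d}`, where `S_ε` is the set of `j` with `Q'_{3M}(j) ⊂ (1/ε)Ω`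
on whose cube `Q_M(j)` the spin `u` is not constant on `C`. -/
theorem card_nonconstant_cubes_le (d T : ℕ) (hd : 0 < d) (hT : 0 < T)
    (S : CSet d T) (M : ℕ) (hM : 0 < M)
    (hMgood : ∀ (j k k' : Zd d),
      k ∈ S.C → k ∈ QM d M j → k' ∈ S.C → k' ∈ QM d M j →
      Relation.ReflTransGen
        (fun x y => cstep S x y ∧ x ∈ Q3M d M j ∧ y ∈ Q3M d M j) k k')
    (Ω : Set (Fin d → ℝ)) (hΩo : IsOpen Ω) (hΩb : Bornology.IsBounded Ω)
    (ε : ℝ) (hε : 0 < ε) (u : Zd d → ℝ)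
    (hu : ∀ k : Zd d, inSc Ω ε k → u k = 1 ∨ u k = -1) (K : ℝ)
    (hK : ({p : Zd d × Zd d | p.1 ∈ S.C ∧ p.2 ∈ S.C ∧ inSc Ω ε p.1 ∧ inSc Ω ε p.2 ∧
        p.2 - p.1 ∈ S.P p.1 ∧ u p.1 ≠ u p.2}.ncard : ℝ) * ε ^ ((d : ℤ) - 1) ≤ K) :
    ({j : Zd d | (∀ x ∈ Q3M d M j, inSc Ω ε x) ∧
        ¬ ∀ k ∈ S.C ∩ QM d M j, ∀ k' ∈ S.C ∩ QM d M j, u k = u k'}.ncard : ℝ)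
      ≤ 3 ^ d * K * ε ^ (1 - (d : ℤ)) := by
  classical
  set J : Set (Zd d × Zd d) := {p : Zd d × Zd d | p.1 ∈ S.C ∧ p.2 ∈ S.C ∧ inSc Ω ε p.1 ∧
      inSc Ω ε p.2 ∧ p.2 - p.1 ∈ S.P p.1 ∧ u p.1 ≠ u p.2} with hJdef
  have hfin : {x : Zd d | inSc Ω ε x}.Finite := finite_inSc hΩb hε
  have hJfin : J.Finite := by
    apply Set.Finite.subset (hfin.prod hfin)
    rintro ⟨a, b⟩ ⟨_, _, h1, h2, _, _⟩
    exact ⟨h1, h2⟩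
  set Sset : Set (Zd d) := {j : Zd d | (∀ x ∈ Q3M d M j, inSc Ω ε x) ∧
      ¬ ∀ k ∈ S.C ∩ QM d M j, ∀ k' ∈ S.C ∩ QM d M j, u k = u k'} with hSdef
  have key : ∀ j ∈ Sset, ∃ p ∈ J, p.1 ∈ Q3M d M j := by
    intro j hj
    obtain ⟨hsub, hnc⟩ := hj
    push_neg at hnc
    obtain ⟨k, hk, k', hk', hne⟩ := hnc
    have hpath := hMgood j k k' hk.1 hk.2 hk'.1 hk'.2
    obtain ⟨x, y, ⟨hstep, hxQ, hyQ⟩, hxy⟩ := exists_change hpath hne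
    exact ⟨(x, y), ⟨hstep.1, hstep.2.1, hsub x hxQ, hsub y hyQ, hstep.2.2, hxy⟩, hxQ⟩
  set Jf := hJfin.toFinset with hJf
  set B : Finset (Zd d) := Jf.biUnion (fun p =>
      Fintype.piFinset fun i => Finset.Icc (p.1 i / (M : ℤ) - 1) (p.1 i / (M : ℤ) + 1))
    with hB
  have hcover : Sset ⊆ ↑B := by
    intro j hj
    obtain ⟨p, hp, hpQ⟩ := key j hj
    rw [Finset.mem_coe, hB, Finset.mem_biUnion]
    exact ⟨p, hJfin.mem_toFinset.2 hp, cube_mem hM hpQ⟩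
  have hBcard : B.card ≤ Jf.card * 3 ^ d := by
    have hone : ∀ p ∈ Jf,
        (Fintype.piFinset fun i =>
          Finset.Icc (p.1 i / (M : ℤ) - 1) (p.1 i / (M : ℤ) + 1)).card = 3 ^ d := by
      intro p _
      rw [Fintype.card_piFinset]
      have : ∀ i : Fin d,
          (Finset.Icc (p.1 i / (M : ℤ) - 1) (p.1 i / (M : ℤ) + 1)).card = 3 := by
        intro i
        rw [Int.card_Icc]
        omega
      simp [this]
    have hsum : ∑ p ∈ Jf, (Fintype.piFinset fun i =>
            Finset.Icc (p.1 i / (M : ℤ) - 1) (p.1 i / (M : ℤ) + 1)).card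
        = Jf.card * 3 ^ d := by
      rw [Finset.sum_congr rfl hone, Finset.sum_const, smul_eq_mul]
    exact Finset.card_biUnion_le.trans hsum.le
  have hScard : Sset.ncard ≤ J.ncard * 3 ^ d := by
    have h1 : Sset.ncard ≤ (↑B : Set (Zd d)).ncard :=
      Set.ncard_le_ncard hcover (B.finite_toSet)
    rw [Set.ncard_coe_finset] at h1
    have h2 : J.ncard = Jf.card := by
      rw [hJf, ← Set.ncard_coe_finset, hJfin.coe_toFinset]
    rw [h2]
    exact h1.trans hBcard
  have hεd : (0 : ℝ) < ε ^ ((d : ℤ) - 1) := zpow_pos hε _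
  have hεd' : (0 : ℝ) < ε ^ (1 - (d : ℤ)) := zpow_pos hε _
  have hmul : ε ^ ((d : ℤ) - 1) * ε ^ (1 - (d : ℤ)) = 1 := by
    rw [← zpow_add₀ (ne_of_gt hε)]
    norm_num
  have hJK : (J.ncard : ℝ) ≤ K * ε ^ (1 - (d : ℤ)) := by
    have := mul_le_mul_of_nonneg_right hK (le_of_lt hεd')
    calc (J.ncard : ℝ) = (J.ncard : ℝ) * (ε ^ ((d : ℤ) - 1) * ε ^ (1 - (d : ℤ))) := by
          rw [hmul, mul_one]
      _ = (J.ncard : ℝ) * ε ^ ((d : ℤ) - 1) * ε ^ (1 - (d : ℤ)) := by ring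
      _ ≤ K * ε ^ (1 - (d : ℤ)) := this
  calc (Sset.ncard : ℝ) ≤ (J.ncard : ℝ) * 3 ^ d := by exact_mod_cast hScard
    _ ≤ (K * ε ^ (1 - (d : ℤ))) * 3 ^ d := by
        apply mul_le_mul_of_nonneg_right hJK
        positivity
    _ = 3 ^ d * K * ε ^ (1 - (d : ℤ)) := by ring
end
end

section
/- There exist a positive integer M and a constant c = c(d) > 0 with the following property. Let Ω ⊂ ℝ^d be open and bounded, ε > 0, u : ℤ^d ∩ (1/ε)Ω → {−1,1}, and suppose ε^{d−1} · #{(k,k') : k,k' ∈ C ∩ (1/ε)Ω, k'−k ∈ P_k, u_k ≠ u_{k'}} ≤ K. Then the number of pairs (j,j') ∈ ℤ^d × ℤ^d with ‖j−j'‖_1 = 1, Q'_{3M}(j) ⊂ (1/ε)Ω, Q'_{3M}(j') ⊂ (1/ε)Ω, such that u is constant on C ∩ Q_M(j) and constant on C ∩ Q_M(j') but these two constant values differ, is at most c K ε^{1−d}. -/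
open scoped Classical

noncomputable section

namespace DPAux
open DP
variable {d T : ℕ}

lemma cstep_symm (S : CSet d T) {x y : Zd d} (h : cstep S x y) : cstep S y x := by
  obtain ⟨hx, hy, hP⟩ := h
  have := S.P_symm x (y - x) hx hP
  refine ⟨hy, hx, ?_⟩
  have h2 := this.2
  simpa [sub_eq_neg_add, add_comm, add_sub_cancel] using h2

lemma cstep_translate (S : CSet d T) (m : Zd d) {x y : Zd d} (h : cstep S x y) :
    cstep S (x + (T : ℤ) • m) (y + (T : ℤ) • m) := by
  obtain ⟨hx, hy, hP⟩ := h
  refine ⟨(S.C_per x m).2 hx, (S.C_per y m).2 hy, ?_⟩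
  rw [S.P_per x m]
  simpa using hP

/-- Path within a region `A`. -/
def rpath (S : CSet d T) (A : Set (Zd d)) (a b : Zd d) : Prop :=
  Relation.ReflTransGen (fun x y => cstep S x y ∧ x ∈ A ∧ y ∈ A) a b

lemma rpath_mono (S : CSet d T) {A B : Set (Zd d)} (hAB : A ⊆ B) {a b : Zd d}
    (h : rpath S A a b) : rpath S B a b :=
  Relation.ReflTransGen.mono (fun x y ⟨h1, h2, h3⟩ => ⟨h1, hAB h2, hAB h3⟩) _ _ h

lemma rpath_symm (S : CSet d T) {A : Set (Zd d)} {a b : Zd d}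
    (h : rpath S A a b) : rpath S A b a := by
  have hs : Symmetric (fun x y => cstep S x y ∧ x ∈ A ∧ y ∈ A) := by
    intro x y ⟨h1, h2, h3⟩; exact ⟨cstep_symm S h1, h3, h2⟩
  haveI : Std.Symm (fun x y => cstep S x y ∧ x ∈ A ∧ y ∈ A) := ⟨fun x y h => hs h⟩
  exact Std.Symm.symm (r := Relation.ReflTransGen (fun x y => cstep S x y ∧ x ∈ A ∧ y ∈ A)) a b h

lemma rpath_trans (S : CSet d T) {A : Set (Zd d)} {a b c : Zd d}
    (h1 : rpath S A a b) (h2 : rpath S A b c) : rpath S A a c := h1.trans h2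

lemma rpath_translate (S : CSet d T) {A : Set (Zd d)} (m : Zd d) {a b : Zd d}
    (h : rpath S A a b) :
    rpath S {x | x - (T : ℤ) • m ∈ A} (a + (T : ℤ) • m) (b + (T : ℤ) • m) := by
  refine Relation.ReflTransGen.lift (fun x => x + (T : ℤ) • m) ?_ _ _ h
  rintro x y ⟨h1, h2, h3⟩
  exact ⟨cstep_translate S m h1, by simpa using h2, by simpa using h3⟩

def rball (a : Zd d) (R : ℤ) : Set (Zd d) := {x | ∀ i, |x i - a i| ≤ R}

/-- Extract a quantitative bound from plain reachability. -/
lemma exists_bounded_path (S : CSet d T) {a b : Zd d}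
    (h : Relation.ReflTransGen (cstep S) a b) :
    ∃ R : ℕ, rpath S (rball a R) a b ∧ b ∈ rball a R := by
  induction h with
  | refl => exact ⟨0, Relation.ReflTransGen.refl, fun i => by simp⟩
  | @tail c b hac hcb ih =>
    obtain ⟨R, hp, hc⟩ := ih
    set R' : ℕ := R + (Finset.univ.sup fun i => (b i - a i).natAbs) with hR'
    have hball : rball a R ⊆ rball a R' := by
      intro x hx i
      exact le_trans (hx i) (by exact_mod_cast Nat.le_add_right R _)
    have hbb : b ∈ rball a R' := by
      intro i
      have h1 : (b i - a i).natAbs ≤ Finset.univ.sup fun j => (b j - a j).natAbs :=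
        Finset.le_sup (f := fun j => (b j - a j).natAbs) (Finset.mem_univ i)
      have h2 : |b i - a i| = ((b i - a i).natAbs : ℤ) := Int.abs_eq_natAbs _
      rw [h2, hR']
      exact_mod_cast le_trans h1 (Nat.le_add_left _ R)
    have hcc : c ∈ rball a R' := fun i => le_trans (hc i) (by exact_mod_cast Nat.le_add_right R _)
    exact ⟨R', (rpath_mono S hball hp).tail ⟨hcb, hcc, hbb⟩, hbb⟩



def sgl (i0 : Fin d) (s : ℤ) : Zd d := fun i => if i = i0 then s else 0

variable (T) in
def mu (k : Zd d) : Zd d := fun i => k i / (T : ℤ)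
variable (T) in
def rho (k : Zd d) : Zd d := fun i => k i % (T : ℤ)

lemma deco (k : Zd d) : rho T k + (T : ℤ) • mu T k = k := by
  funext i
  simpa [rho, mu] using Int.emod_add_mul_ediv (k i) (T : ℤ)

lemma rho_mem (S : CSet d T) {k : Zd d} (hk : k ∈ S.C) : rho T k ∈ S.C := by
  have := S.C_per (rho T k) (mu T k)
  rw [deco] at this
  exact this.1 hk

lemma rho_bounds (hT : 0 < T) (k : Zd d) (i : Fin d) :
    0 ≤ rho T k i ∧ rho T k i < T := by
  have hT' : (0 : ℤ) < T := by exact_mod_cast hT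
  exact ⟨Int.emod_nonneg _ (ne_of_gt hT'), Int.emod_lt_of_pos _ hT'⟩

/-- The key local-connectivity lemma: a uniform constant `R` such that any two points of
`C` are joined by a path staying in the `R`-inflation of their bounding box. -/
lemma exists_R (S : CSet d T) (hT : 0 < T) :
    ∃ R : ℕ, ∀ k k', k ∈ S.C → k' ∈ S.C →
      rpath S {x | ∀ i, min (k i) (k' i) - (R : ℤ) ≤ x i ∧ x i ≤ max (k i) (k' i) + (R : ℤ)}
        k k' := by
  classical
  have hT' : (0 : ℤ) < T := by exact_mod_cast hT
  -- base point
  set k0 : Zd d := rho T S.C_ne.choose with hk0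
  have hk0C : k0 ∈ S.C := rho_mem S S.C_ne.choose_spec
  have hk0b : ∀ i, 0 ≤ k0 i ∧ k0 i < T := rho_bounds hT _
  -- R₁ : residues reach k0
  have hres : ∀ r : Zd d, ∃ R : ℕ, r ∈ S.C → rpath S (rball r R) r k0 := by
    intro r
    by_cases hr : r ∈ S.C
    · obtain ⟨R, hp, _⟩ := exists_bounded_path S (S.connected r k0 hr hk0C)
      exact ⟨R, fun _ => hp⟩
    · exact ⟨0, fun h => absurd h hr⟩
  choose g1 hg1 using hres
  set FS : Finset (Zd d) := Finset.Icc 0 (fun _ => (T : ℤ) - 1) with hFS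
  set R₁ : ℕ := FS.sup g1 with hR₁
  have hR₁p : ∀ r : Zd d, r ∈ S.C → (∀ i, 0 ≤ r i ∧ r i < T) →
      rpath S (rball r R₁) r k0 := by
    intro r hr hb
    have hrFS : r ∈ FS := by
      rw [hFS, Finset.mem_Icc]
      constructor
      · intro i; exact (hb i).1
      · intro i; show r i ≤ (T : ℤ) - 1; have := (hb i).2; omega
    have : (g1 r : ℤ) ≤ R₁ := by exact_mod_cast Finset.le_sup (f := g1) hrFS
    refine rpath_mono S ?_ (hg1 r hr)
    intro x hx i; exact le_trans (hx i) this
  -- R₂ : base paths to neighbouring period cells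
  have hbase : ∀ p : Fin d × ℤ, ∃ R : ℕ, p.2 = 1 ∨ p.2 = -1 →
      rpath S (rball k0 R) k0 (k0 + (T : ℤ) • sgl p.1 p.2) := by
    rintro ⟨i0, s⟩
    by_cases hs : s = 1 ∨ s = -1
    · have hmem : k0 + (T : ℤ) • sgl i0 s ∈ S.C := (S.C_per k0 (sgl i0 s)).2 hk0C
      obtain ⟨R, hp, _⟩ := exists_bounded_path S (S.connected _ _ hk0C hmem)
      exact ⟨R, fun _ => hp⟩
    · exact ⟨0, fun h => absurd h hs⟩
  choose g2 hg2 using hbase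
  set R₂ : ℕ := (Finset.univ : Finset (Fin d)).sup (fun i0 => max (g2 (i0, 1)) (g2 (i0, -1)))
    with hR₂
  have hR₂p : ∀ (i0 : Fin d) (s : ℤ), s = 1 ∨ s = -1 →
      rpath S (rball k0 R₂) k0 (k0 + (T : ℤ) • sgl i0 s) := by
    intro i0 s hs
    have hle : g2 (i0, s) ≤ R₂ := by
      rcases hs with h | h <;> subst h <;>
        exact le_trans (by simp) (Finset.le_sup (Finset.mem_univ i0))
    have hle' : (g2 (i0, s) : ℤ) ≤ R₂ := by exact_mod_cast hle
    refine rpath_mono S ?_ (hg2 (i0, s) hs)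
    intro x hx i; exact le_trans (hx i) hle' 
  -- staircase
  have stair : ∀ n : ℕ, ∀ m m' : Zd d, (∑ i, (m' i - m i).natAbs) = n →
      rpath S {x | ∀ i, (T : ℤ) * min (m i) (m' i) - (R₂ : ℤ) ≤ x i - k0 i ∧
          x i - k0 i ≤ (T : ℤ) * max (m i) (m' i) + (R₂ : ℤ)}
        (k0 + (T : ℤ) • m) (k0 + (T : ℤ) • m') := by
    intro n
    induction n with
    | zero =>
      intro m m' hsum
      have hmm : m = m' := by
        funext i
        have : (m' i - m i).natAbs = 0 := by
          have := Finset.sum_eq_zero_iff.1 hsum i (Finset.mem_univ i)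
          exact this
        omega
      subst hmm
      exact Relation.ReflTransGen.refl
    | succ n ih =>
      intro m m' hsum
      have hne : ∃ i0, m i0 ≠ m' i0 := by
        by_contra h
        push_neg at h
        have : (∑ i, (m' i - m i).natAbs) = 0 :=
          Finset.sum_eq_zero fun i _ => by rw [h i]; omega
        omega
      obtain ⟨i0, hi0⟩ := hne
      set s : ℤ := if m i0 < m' i0 then 1 else -1 with hs
      set m1 : Zd d := fun i => if i = i0 then m i0 + s else m i with hm1
      have hm1eq : (k0 + (T : ℤ) • m1) = (k0 + (T : ℤ) • sgl i0 s) + (T : ℤ) • m := by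
        funext i
        simp only [Pi.add_apply, Pi.smul_apply, smul_eq_mul, hm1, sgl]
        by_cases h : i = i0 <;> simp [h] <;> ring
      -- sum decreases
      have hsum1 : (∑ i, (m' i - m1 i).natAbs) = n := by
        have key : ∀ i ∈ Finset.univ.erase i0, (m' i - m1 i).natAbs = (m' i - m i).natAbs := by
          intro i hi
          have : i ≠ i0 := (Finset.mem_erase.1 hi).1
          simp [hm1, this]
        have e1 : (m' i0 - m1 i0).natAbs + ∑ x ∈ Finset.univ.erase i0, (m' x - m1 x).natAbs
            = ∑ i, (m' i - m1 i).natAbs :=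
          Finset.add_sum_erase _ (fun i => (m' i - m1 i).natAbs) (Finset.mem_univ i0)
        have e2 : (m' i0 - m i0).natAbs + ∑ x ∈ Finset.univ.erase i0, (m' x - m x).natAbs
            = ∑ i, (m' i - m i).natAbs :=
          Finset.add_sum_erase _ (fun i => (m' i - m i).natAbs) (Finset.mem_univ i0)
        have e3 : ∑ x ∈ Finset.univ.erase i0, (m' x - m1 x).natAbs
            = ∑ x ∈ Finset.univ.erase i0, (m' x - m x).natAbs := Finset.sum_congr rfl key
        have h0 : (m' i0 - m1 i0).natAbs = (m' i0 - m i0).natAbs - 1 ∧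
            1 ≤ (m' i0 - m i0).natAbs := by
          simp only [hm1, if_pos rfl, hs]
          by_cases h : m i0 < m' i0 <;> simp [h] <;> omega
        omega
      -- base segment, translated by m
      have seg0 := rpath_translate S m (hR₂p i0 s (by rw [hs]; split <;> simp))
      rw [← hm1eq] at seg0
      have hseg : rpath S {x | ∀ i, (T : ℤ) * min (m i) (m' i) - (R₂ : ℤ) ≤ x i - k0 i ∧
          x i - k0 i ≤ (T : ℤ) * max (m i) (m' i) + (R₂ : ℤ)}
          (k0 + (T : ℤ) • m) (k0 + (T : ℤ) • m1) := by
        refine rpath_mono S ?_ seg0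
        intro x hx i
        have hxi : |x i - (T : ℤ) * m i - k0 i| ≤ (R₂ : ℤ) := by
          simpa [sub_sub, add_comm] using hx i
        have h1 : (T : ℤ) * min (m i) (m' i) ≤ (T : ℤ) * m i :=
          mul_le_mul_of_nonneg_left (min_le_left _ _) (le_of_lt hT')
        have h2 : (T : ℤ) * m i ≤ (T : ℤ) * max (m i) (m' i) :=
          mul_le_mul_of_nonneg_left (le_max_left _ _) (le_of_lt hT')
        have := abs_le.1 hxi
        constructor <;> linarith [this.1, this.2]
      -- inductive path from m1
      have hstep := ih m1 m' hsum1
      have hsub : {x : Zd d | ∀ i, (T : ℤ) * min (m1 i) (m' i) - (R₂ : ℤ) ≤ x i - k0 i ∧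
          x i - k0 i ≤ (T : ℤ) * max (m1 i) (m' i) + (R₂ : ℤ)} ⊆
          {x : Zd d | ∀ i, (T : ℤ) * min (m i) (m' i) - (R₂ : ℤ) ≤ x i - k0 i ∧
          x i - k0 i ≤ (T : ℤ) * max (m i) (m' i) + (R₂ : ℤ)} := by
        intro x hx i
        obtain ⟨l, r⟩ := hx i
        have hminle : min (m i) (m' i) ≤ min (m1 i) (m' i) := by
          by_cases h : i = i0
          · subst h
            simp only [hm1, if_pos rfl, hs]
            by_cases hh : m i < m' i <;> simp [hh] <;> omega
          · simp [hm1, h]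
        have hmaxle : max (m1 i) (m' i) ≤ max (m i) (m' i) := by
          by_cases h : i = i0
          · subst h
            simp only [hm1, if_pos rfl, hs]
            by_cases hh : m i < m' i <;> simp [hh] <;> omega
          · simp [hm1, h]
        have h1 : (T : ℤ) * min (m i) (m' i) ≤ (T : ℤ) * min (m1 i) (m' i) :=
          mul_le_mul_of_nonneg_left hminle (le_of_lt hT')
        have h2 : (T : ℤ) * max (m1 i) (m' i) ≤ (T : ℤ) * max (m i) (m' i) :=
          mul_le_mul_of_nonneg_left hmaxle (le_of_lt hT')
        constructor <;> linarith
      exact rpath_trans S hseg (rpath_mono S hsub hstep)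
  -- glue
  refine ⟨R₁ + R₂ + T, ?_⟩
  intro k k' hk hk'
  set R : ℕ := R₁ + R₂ + T with hR
  set B : Set (Zd d) :=
    {x | ∀ i, min (k i) (k' i) - (R : ℤ) ≤ x i ∧ x i ≤ max (k i) (k' i) + (R : ℤ)} with hB
  -- path k → k0 + T•(mu k)
  have hrk : rho T k ∈ S.C := rho_mem S hk
  have hrk' : rho T k' ∈ S.C := rho_mem S hk'
  have pA0 := rpath_translate S (mu T k) (hR₁p (rho T k) hrk (rho_bounds hT k))
  rw [deco] at pA0
  have pA'0 := rpath_translate S (mu T k') (hR₁p (rho T k') hrk' (rho_bounds hT k'))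
  rw [deco] at pA'0
  have hball : ∀ (κ : Zd d), (∀ i, min (k i) (k' i) ≤ κ i ∧ κ i ≤ max (k i) (k' i)) →
      {x : Zd d | x - (T : ℤ) • mu T κ ∈ rball (rho T κ) R₁} ⊆ B := by
    intro κ hκ x hx i
    have hxi : |x i - (T : ℤ) * mu T κ i - rho T κ i| ≤ (R₁ : ℤ) := by
      simpa using hx i
    have hdec : rho T κ i + (T : ℤ) * mu T κ i = κ i := by
      have := congrFun (deco (T := T) κ) i
      simpa using this
    have := abs_le.1 hxi
    have h1 := (hκ i).1
    have h2 := (hκ i).2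
    have hRc : (R : ℤ) = (R₁ : ℤ) + (R₂ : ℤ) + (T : ℤ) := by rw [hR]; push_cast; ring
    have hR2 : (0 : ℤ) ≤ (R₂ : ℤ) := Int.natCast_nonneg _
    constructor <;> [linarith [this.1]; linarith [this.2]]
  have pA : rpath S B k (k0 + (T : ℤ) • mu T k) := by
    refine rpath_mono S (hball k fun i => ⟨min_le_left _ _, le_max_left _ _⟩) pA0
  have pA' : rpath S B k' (k0 + (T : ℤ) • mu T k') := by
    refine rpath_mono S (hball k' fun i => ⟨min_le_right _ _, le_max_right _ _⟩) pA'0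
  -- staircase in B
  have pS0 := stair (∑ i, (mu T k' i - mu T k i).natAbs) (mu T k) (mu T k') rfl
  have pS : rpath S B (k0 + (T : ℤ) • mu T k) (k0 + (T : ℤ) • mu T k') := by
    refine rpath_mono S ?_ pS0
    intro x hx i
    obtain ⟨l, r⟩ := hx i
    have hdk : rho T k i + (T : ℤ) * mu T k i = k i := by
      simpa using congrFun (deco (T := T) k) i
    have hdk' : rho T k' i + (T : ℤ) * mu T k' i = k' i := by
      simpa using congrFun (deco (T := T) k') i
    have hbk := rho_bounds hT k i
    have hbk' := rho_bounds hT k' i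
    have hb0 := hk0b i
    have hRc : (R : ℤ) = (R₁ : ℤ) + (R₂ : ℤ) + (T : ℤ) := by rw [hR]; push_cast; ring
    have hR1 : (0 : ℤ) ≤ (R₁ : ℤ) := Int.natCast_nonneg _
    rcases le_total (mu T k i) (mu T k' i) with h | h
    · rw [min_eq_left h] at l; rw [max_eq_right h] at r
      constructor
      · have : min (k i) (k' i) ≤ k i := min_le_left _ _
        linarith
      · have : k' i ≤ max (k i) (k' i) := le_max_right _ _
        linarith
    · rw [min_eq_right h] at l; rw [max_eq_left h] at r
      constructor
      · have : min (k i) (k' i) ≤ k' i := min_le_right _ _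
        linarith
      · have : k i ≤ max (k i) (k' i) := le_max_left _ _
        linarith
  exact rpath_trans S (rpath_trans S pA pS) (rpath_symm S pA')

lemma exists_diff_step {α : Type*} {r : α → α → Prop} {u : α → ℝ} {a b : α}
    (h : Relation.ReflTransGen r a b) (hu : u a ≠ u b) :
    ∃ x y, r x y ∧ u x ≠ u y := by
  induction h with
  | refl => exact absurd rfl hu
  | @tail c b' hac hcb ih =>
    by_cases hc : u c = u b'
    · exact ih fun h => hu (h.trans hc)
    · exact ⟨c, b', hcb, hc⟩

lemma adj_decomp {j j' : Zd d} (h : (∑ i, |j i - j' i|) = 1) :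
    ∃ i0, (j' i0 = j i0 + 1 ∨ j' i0 = j i0 - 1) ∧ ∀ i, i ≠ i0 → j i = j' i := by
  have hnz : ∃ i0, j i0 ≠ j' i0 := by
    by_contra hco
    push_neg at hco
    have : (∑ i, |j i - j' i|) = 0 := Finset.sum_eq_zero fun i _ => by rw [hco i]; simp
    omega
  obtain ⟨i0, hi0⟩ := hnz
  have hle : |j i0 - j' i0| ≤ 1 := by
    calc |j i0 - j' i0| ≤ ∑ i, |j i - j' i| :=
          Finset.single_le_sum (f := fun i => |j i - j' i|)
            (fun i _ => abs_nonneg _) (Finset.mem_univ i0)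
      _ = 1 := h
  have hab := abs_le.1 hle
  refine ⟨i0, by omega, ?_⟩
  intro i hi
  have h10 : 1 ≤ |j i0 - j' i0| := Int.one_le_abs (sub_ne_zero.2 hi0)
  have hpair : |j i - j' i| + |j i0 - j' i0| ≤ 1 := by
    have hsub : ({i, i0} : Finset (Fin d)) ⊆ Finset.univ := Finset.subset_univ _
    have h2 := Finset.sum_le_sum_of_subset_of_nonneg hsub
      (fun x _ _ => abs_nonneg (j x - j' x))
    rw [Finset.sum_pair hi, h] at h2
    exact h2
  have h0 : |j i - j' i| = 0 := le_antisymm (by omega) (abs_nonneg _)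
  have := abs_eq_zero.1 h0
  omega


lemma box_subset_Q3M {M R : ℕ} (hRM : R ≤ M) {j j' k k' : Zd d}
    (hadj : (∑ i, |j i - j' i|) = 1) (hk : k ∈ QM d M j) (hk' : k' ∈ QM d M j') :
    {x : Zd d | ∀ i, min (k i) (k' i) - (R : ℤ) ≤ x i ∧ x i ≤ max (k i) (k' i) + (R : ℤ)}
      ⊆ Q3M d M j ∪ Q3M d M j' := by
  obtain ⟨i0, hsign, hoff⟩ := adj_decomp hadj
  intro x hx
  have hRM' : (R : ℤ) ≤ (M : ℤ) := by exact_mod_cast hRM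
  have hM0 : (0 : ℤ) ≤ (M : ℤ) := Int.natCast_nonneg _
  -- common bounds at coordinates ≠ i0
  have hcoord : ∀ i, i ≠ i0 → ((M : ℤ) * j i - M ≤ x i ∧ x i < (M : ℤ) * j i + 2 * M) := by
    intro i hi
    have e : (M : ℤ) * j' i = (M : ℤ) * j i := by rw [hoff i hi]
    have hxb := hx i
    have hkb := hk i
    have hk'b := hk' i
    have hm : (M : ℤ) * j i ≤ min (k i) (k' i) := le_min hkb.1 (by linarith [hk'b.1])
    have hM : max (k i) (k' i) ≤ (M : ℤ) * j i + M - 1 :=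
      max_le (by linarith [hkb.2]) (by linarith [hk'b.2])
    constructor <;> linarith [hxb.1, hxb.2]
  have hxb0 := hx i0
  have hkb0 := hk i0
  have hk'b0 := hk' i0
  rcases hsign with h1 | h1
  · -- j' i0 = j i0 + 1
    have e : (M : ℤ) * j' i0 = (M : ℤ) * j i0 + M := by rw [h1]; ring
    by_cases hcut : x i0 < (M : ℤ) * j i0 + 2 * M
    · left
      intro i
      by_cases hi : i = i0
      · subst hi
        have hm : (M : ℤ) * j i ≤ min (k i) (k' i) := le_min hkb0.1 (by linarith [hk'b0.1])
        exact ⟨by linarith [hxb0.1], hcut⟩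
      · exact hcoord i hi
    · right
      intro i
      by_cases hi : i = i0
      · subst hi
        have hM : max (k i) (k' i) ≤ (M : ℤ) * j' i + M - 1 :=
          max_le (by linarith [hkb0.2]) (by linarith [hk'b0.2])
        exact ⟨by linarith, by linarith [hxb0.2]⟩
      · have e2 : (M : ℤ) * j' i = (M : ℤ) * j i := by rw [hoff i hi]
        have := hcoord i hi
        constructor <;> linarith [this.1, this.2]
  · -- j' i0 = j i0 - 1
    have e : (M : ℤ) * j' i0 = (M : ℤ) * j i0 - M := by rw [h1]; ring
    by_cases hcut : (M : ℤ) * j i0 - M ≤ x i0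
    · left
      intro i
      by_cases hi : i = i0
      · subst hi
        have hM : max (k i) (k' i) ≤ (M : ℤ) * j i + M - 1 :=
          max_le (by linarith [hkb0.2]) (by linarith [hk'b0.2])
        exact ⟨hcut, by linarith [hxb0.2]⟩
      · exact hcoord i hi
    · right
      intro i
      by_cases hi : i = i0
      · subst hi
        have hm : (M : ℤ) * j' i ≤ min (k i) (k' i) := le_min (by linarith [hkb0.1]) (by linarith [hk'b0.1])
        exact ⟨by linarith [hxb0.1], by linarith⟩
      · have e2 : (M : ℤ) * j' i = (M : ℤ) * j i := by rw [hoff i hi]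
        have := hcoord i hi
        constructor <;> linarith [this.1, this.2]

lemma window {M : ℕ} (hM : 0 < M) {a : ℤ} {b : ℤ} (h1 : (M : ℤ) * b - M ≤ a)
    (h2 : a < (M : ℤ) * b + 2 * M) : b - 1 ≤ a / (M : ℤ) ∧ a / (M : ℤ) ≤ b + 1 := by
  have hM' : (0 : ℤ) < M := by exact_mod_cast hM
  constructor
  · rw [Int.le_ediv_iff_mul_le hM']
    nlinarith
  · have : a / (M : ℤ) < b + 2 := by
      rw [Int.ediv_lt_iff_lt_mul hM']
      nlinarith
    omega

end DPAux


open DP DPAux in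

/-- there exist a positive integer `M` and `c = c(d) > 0` such that for
every bounded open `Ω`, `ε > 0` and spin field `u` with
`ε^{d-1} #{(k,k') : k,k' ∈ C ∩ (1/ε)Ω, k'-k ∈ P_k, u_k ≠ u_{k'}} ≤ K`, the number of
pairs of neighbouring cubes `Q_M(j), Q_M(j')` (with `‖j-j'‖₁ = 1`) contained via
`Q'_{3M}` in `(1/ε)Ω`, on each of which `u` is constant on `C` but with different
constant values, is at most `c K ε^{1-d}`. -/
theorem card_jumping_neighbour_cubes_le (d T : ℕ) (hd : 0 < d) (hT : 0 < T)
    (S : CSet d T) :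
    ∃ (M : ℕ) (c : ℝ), 0 < M ∧ 0 < c ∧
      ∀ (Ω : Set (Fin d → ℝ)), IsOpen Ω → Bornology.IsBounded Ω →
      ∀ (ε : ℝ), 0 < ε → ∀ (u : Zd d → ℝ),
        (∀ k : Zd d, inSc Ω ε k → u k = 1 ∨ u k = -1) →
      ∀ (K : ℝ),
        ({p : Zd d × Zd d | p.1 ∈ S.C ∧ p.2 ∈ S.C ∧ inSc Ω ε p.1 ∧ inSc Ω ε p.2 ∧
            p.2 - p.1 ∈ S.P p.1 ∧ u p.1 ≠ u p.2}.ncard : ℝ) * ε ^ ((d : ℤ) - 1) ≤ K →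
        ({p : Zd d × Zd d | (∑ i, |p.1 i - p.2 i|) = 1 ∧
            (∀ x ∈ Q3M d M p.1, inSc Ω ε x) ∧ (∀ x ∈ Q3M d M p.2, inSc Ω ε x) ∧
            (∀ k ∈ S.C ∩ QM d M p.1, ∀ k' ∈ S.C ∩ QM d M p.1, u k = u k') ∧
            (∀ k ∈ S.C ∩ QM d M p.2, ∀ k' ∈ S.C ∩ QM d M p.2, u k = u k') ∧
            ∃ k ∈ S.C ∩ QM d M p.1, ∃ k' ∈ S.C ∩ QM d M p.2, u k ≠ u k'}.ncard : ℝ)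
          ≤ c * K * ε ^ (1 - (d : ℤ)) := by
  classical
  obtain ⟨R, hRpath⟩ := DPAux.exists_R S hT
  refine ⟨R + 1, (25 : ℝ) ^ d, Nat.succ_pos R, by positivity, ?_⟩
  intro Ω hΩo hΩb ε hε u hu K hK
  set M : ℕ := R + 1 with hM
  have hM0 : 0 < M := Nat.succ_pos R
  have hMZ : (0 : ℤ) < (M : ℤ) := by exact_mod_cast hM0
  set Bond := {p : Zd d × Zd d | p.1 ∈ S.C ∧ p.2 ∈ S.C ∧ inSc Ω ε p.1 ∧ inSc Ω ε p.2 ∧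
      p.2 - p.1 ∈ S.P p.1 ∧ u p.1 ≠ u p.2} with hBondDef
  set Jump := {p : Zd d × Zd d | (∑ i, |p.1 i - p.2 i|) = 1 ∧
      (∀ x ∈ Q3M d M p.1, inSc Ω ε x) ∧ (∀ x ∈ Q3M d M p.2, inSc Ω ε x) ∧
      (∀ k ∈ S.C ∩ QM d M p.1, ∀ k' ∈ S.C ∩ QM d M p.1, u k = u k') ∧
      (∀ k ∈ S.C ∩ QM d M p.2, ∀ k' ∈ S.C ∩ QM d M p.2, u k = u k') ∧
      ∃ k ∈ S.C ∩ QM d M p.1, ∃ k' ∈ S.C ∩ QM d M p.2, u k ≠ u k'} with hJumpDef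
  -- finiteness of the set of scaled lattice points in Ω
  obtain ⟨ρ0, hρ0⟩ := hΩb.subset_closedBall 0
  set N : ℤ := ⌈ρ0 / ε⌉ with hN
  have hSc : ∀ k : Zd d, inSc Ω ε k → ∀ i, -N ≤ k i ∧ k i ≤ N := by
    intro k hk i
    have h1 : (fun i => ε * (k i : ℝ)) ∈ Metric.closedBall 0 ρ0 := hρ0 hk
    have h2 : ‖(fun i => ε * (k i : ℝ))‖ ≤ ρ0 := by
      simpa [Metric.mem_closedBall, dist_zero_right] using h1
    have h3 : |ε * (k i : ℝ)| ≤ ρ0 :=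
      le_trans (norm_le_pi_norm (fun i => ε * (k i : ℝ)) i) h2
    have h4 : |(k i : ℝ)| ≤ ρ0 / ε := by
      rw [abs_mul, abs_of_pos hε] at h3
      rw [le_div_iff₀ hε]
      linarith
    have h5 : |(k i : ℝ)| ≤ (N : ℝ) := le_trans h4 (by rw [hN]; exact Int.le_ceil _)
    have h6 : |k i| ≤ N := by exact_mod_cast h5
    exact abs_le.1 h6
  have hScfin : {k : Zd d | inSc Ω ε k}.Finite := by
    refine Set.Finite.subset (Finset.Icc (fun _ => -N) (fun _ => N) : Finset (Zd d)).finite_toSet ?_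
    intro k hk
    rw [Finset.mem_coe, Finset.mem_Icc]
    exact ⟨fun i => (hSc k hk i).1, fun i => (hSc k hk i).2⟩
  have hBfin : Bond.Finite := by
    refine (hScfin.prod hScfin).subset ?_
    intro p hp
    exact ⟨hp.2.2.1, hp.2.2.2.1⟩
  -- Jump is finite
  set f : (Zd d × Zd d) → (Zd d × Zd d) :=
    fun p => (fun i => (M : ℤ) * p.1 i, fun i => (M : ℤ) * p.2 i) with hf
  have hfinj : Function.Injective f := by
    intro p q hpq
    have h1 := congrArg Prod.fst hpq
    have h2 := congrArg Prod.snd hpq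
    have e1 : p.1 = q.1 := by
      funext i
      have := congrFun h1 i
      exact mul_left_cancel₀ (ne_of_gt hMZ) this
    have e2 : p.2 = q.2 := by
      funext i
      have := congrFun h2 i
      exact mul_left_cancel₀ (ne_of_gt hMZ) this
    exact Prod.ext e1 e2
  have hcenter : ∀ j : Zd d, (fun i => (M : ℤ) * j i) ∈ Q3M d M j := by
    intro j i
    constructor
    · show (M : ℤ) * j i - M ≤ (M : ℤ) * j i
      linarith
    · show (M : ℤ) * j i < (M : ℤ) * j i + 2 * M
      linarith
  have hJfin : Jump.Finite := by
    refine ((hScfin.prod hScfin).preimage hfinj.injOn).subset ?_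
    intro p hp
    exact ⟨hp.2.1 _ (hcenter p.1), hp.2.2.1 _ (hcenter p.2)⟩
  -- selection of a jump bond for each pair of jumping cubes
  have hsel : ∀ p : Zd d × Zd d, p ∈ Jump →
      ∃ b : Zd d × Zd d, b ∈ Bond ∧ b.1 ∈ Q3M d M p.1 ∪ Q3M d M p.2 := by
    rintro ⟨j, j'⟩ ⟨hadj, hin1, hin2, -, -, k, ⟨hkC, hkQ⟩, k', ⟨hk'C, hk'Q⟩, hukk⟩
    have hpath := hRpath k k' hkC hk'C
    have hsub := DPAux.box_subset_Q3M (M := M) (R := R) (Nat.le_succ R) hadj hkQ hk'Q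
    have hpath' : rpath S (Q3M d M j ∪ Q3M d M j') k k' := rpath_mono S hsub hpath
    obtain ⟨a, b, ⟨hstep, haU, hbU⟩, hab⟩ := DPAux.exists_diff_step hpath' hukk
    have hina : inSc Ω ε a := by rcases haU with h | h; exacts [hin1 a h, hin2 a h]
    have hinb : inSc Ω ε b := by rcases hbU with h | h; exacts [hin1 b h, hin2 b h]
    exact ⟨(a, b), ⟨hstep.1, hstep.2.1, hina, hinb, hstep.2.2, hab⟩, haU⟩
  choose! Φ hΦ1 hΦ2 using hsel
  -- fiberwise counting
  have hmap : ∀ p ∈ hJfin.toFinset, Φ p ∈ hBfin.toFinset := by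
    intro p hp
    rw [Set.Finite.mem_toFinset] at *
    exact hΦ1 p hp
  have hcard := Finset.card_eq_sum_card_fiberwise hmap
  have hfib : ∀ b ∈ hBfin.toFinset,
      (hJfin.toFinset.filter fun p => Φ p = b).card ≤ 25 ^ d := by
    intro b hb
    set w : Zd d := fun i => b.1 i / (M : ℤ) with hw
    have hsubfib : (hJfin.toFinset.filter fun p => Φ p = b) ⊆
        (Finset.Icc (fun i => w i - 2) (fun i => w i + 2)) ×ˢ
          (Finset.Icc (fun i => w i - 2) (fun i => w i + 2)) := by
      intro p hp
      obtain ⟨hpJ, hpb⟩ := Finset.mem_filter.1 hp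
      have hpJump : p ∈ Jump := (Set.Finite.mem_toFinset _).1 hpJ
      have hwin := hΦ2 p hpJump
      rw [hpb] at hwin
      have hadj : ∀ i, |p.1 i - p.2 i| ≤ 1 := by
        intro i
        have h1 := Finset.single_le_sum (f := fun i => |p.1 i - p.2 i|)
          (fun i _ => abs_nonneg _) (Finset.mem_univ i)
        exact le_trans h1 (le_of_eq hpJump.1)
      have hbd : ∀ i, w i - 2 ≤ p.1 i ∧ p.1 i ≤ w i + 2 ∧ w i - 2 ≤ p.2 i ∧ p.2 i ≤ w i + 2 := by
        intro i
        have hai := abs_le.1 (hadj i)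
        rcases hwin with h | h
        · have hww : p.1 i - 1 ≤ w i ∧ w i ≤ p.1 i + 1 :=
            DPAux.window hM0 (h i).1 (h i).2
          exact ⟨by linarith [hww.1, hai.1], by linarith [hww.2, hai.2],
            by linarith [hww.1, hai.2], by linarith [hww.2, hai.1]⟩
        · have hww : p.2 i - 1 ≤ w i ∧ w i ≤ p.2 i + 1 :=
            DPAux.window hM0 (h i).1 (h i).2
          exact ⟨by linarith [hww.1, hai.1], by linarith [hww.2, hai.2],
            by linarith [hww.1, hai.2], by linarith [hww.2, hai.1]⟩
      rw [Finset.mem_product, Finset.mem_Icc, Finset.mem_Icc]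
      exact ⟨⟨fun i => (hbd i).1, fun i => (hbd i).2.1⟩,
        fun i => (hbd i).2.2.1, fun i => (hbd i).2.2.2⟩
    have hIcccard : (Finset.Icc (fun i => w i - 2) (fun i => w i + 2) : Finset (Zd d)).card
        = 5 ^ d := by
      rw [Pi.card_Icc]
      have : ∀ i : Fin d, (Finset.Icc (w i - 2) (w i + 2)).card = 5 := by
        intro i
        rw [Int.card_Icc]
        omega
      rw [Finset.prod_congr rfl fun i _ => this i, Finset.prod_const, Finset.card_univ,
        Fintype.card_fin]
    calc (hJfin.toFinset.filter fun p => Φ p = b).card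
        ≤ _ := Finset.card_le_card hsubfib
      _ = 5 ^ d * 5 ^ d := by rw [Finset.card_product, hIcccard]
      _ = 25 ^ d := by rw [← mul_pow]; norm_num
  have hJBnat : hJfin.toFinset.card ≤ 25 ^ d * hBfin.toFinset.card := by
    rw [hcard]
    calc (∑ b ∈ hBfin.toFinset, (hJfin.toFinset.filter fun p => Φ p = b).card)
        ≤ ∑ _b ∈ hBfin.toFinset, 25 ^ d := Finset.sum_le_sum hfib
      _ = hBfin.toFinset.card * 25 ^ d := by rw [Finset.sum_const, smul_eq_mul]
      _ = 25 ^ d * hBfin.toFinset.card := by ring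
  -- conclude
  have hJn : (Jump.ncard : ℝ) = (hJfin.toFinset.card : ℝ) := by
    rw [Set.ncard_eq_toFinset_card Jump hJfin]
  have hBn : (Bond.ncard : ℝ) = (hBfin.toFinset.card : ℝ) := by
    rw [Set.ncard_eq_toFinset_card Bond hBfin]
  rw [hBn] at hK
  have hεd : (0 : ℝ) < ε ^ (1 - (d : ℤ)) := zpow_pos hε _
  have hεd' : (0 : ℝ) < ε ^ ((d : ℤ) - 1) := zpow_pos hε _
  have hone : ε ^ ((d : ℤ) - 1) * ε ^ (1 - (d : ℤ)) = 1 := by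
    rw [← zpow_add₀ (ne_of_gt hε)]
    norm_num
  calc (Jump.ncard : ℝ) = (hJfin.toFinset.card : ℝ) := hJn
    _ ≤ (25 : ℝ) ^ d * (hBfin.toFinset.card : ℝ) := by exact_mod_cast hJBnat
    _ = (25 : ℝ) ^ d * (((hBfin.toFinset.card : ℝ) * ε ^ ((d : ℤ) - 1)) * ε ^ (1 - (d : ℤ))) := by
        rw [mul_assoc, hone, mul_one]
    _ ≤ (25 : ℝ) ^ d * (K * ε ^ (1 - (d : ℤ))) := by
        have h1 : ((hBfin.toFinset.card : ℝ) * ε ^ ((d : ℤ) - 1)) * ε ^ (1 - (d : ℤ))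
            ≤ K * ε ^ (1 - (d : ℤ)) := mul_le_mul_of_nonneg_right hK (le_of_lt hεd)
        have h2 : (0 : ℝ) ≤ (25 : ℝ) ^ d := by positivity
        exact mul_le_mul_of_nonneg_left h1 h2
    _ = (25 : ℝ) ^ d * K * ε ^ (1 - (d : ℤ)) := by ring
end
end

section
/- The limit φ(z) := lim_{M→∞, M even} φ_M(z) exists for each z ∈ {−1,1} and equals g(z) − (1/2)·max{0, g(z) − g(−z) − 2β}; equivalently, φ(z) = (1/2)·g(z) + (1/2)·min{g(z), g(−z) + 2β}. -/
noncomputable section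

namespace DP1

/-- The energy of a one-dimensional chain of `M` spins with weak nearest-neighbour
interactions of coefficient `β/4` and forcing term `g`. -/
def en1 (g : ℝ → ℝ) (β : ℝ) (M : ℕ) (v : ℕ → ℝ) : ℝ :=
  (∑ i ∈ Finset.Ico 1 M, β / 4 * (v i - v (i - 1)) ^ 2) +
    ∑ i ∈ Finset.range M, g (v i)

/-- `φ_M(z)`: the minimal energy density over spin chains frozen at `z` on the odd
sublattice. -/
def phi1 (g : ℝ → ℝ) (β z : ℝ) (M : ℕ) : ℝ :=
  sInf (en1 g β M ''
    {v : ℕ → ℝ | (∀ i < M, v i = 1 ∨ v i = -1) ∧ ∀ i < M, Odd i → v i = z}) / M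

end DP1

open DP1

lemma en1_two (g : ℝ → ℝ) (β : ℝ) (v : ℕ → ℝ) :
    en1 g β 2 v = β / 4 * (v 1 - v 0) ^ 2 + (g (v 0) + g (v 1)) := by
  simp [en1, Finset.sum_range_succ, show Finset.Ico 1 2 = {1} from rfl]

lemma en1_rec (g : ℝ → ℝ) (β : ℝ) (n : ℕ) (hn : 1 ≤ n) (v : ℕ → ℝ) :
    en1 g β (n + 2) v = en1 g β n v
      + β / 4 * (v n - v (n - 1)) ^ 2 + β / 4 * (v (n + 1) - v n) ^ 2
      + g (v n) + g (v (n + 1)) := by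
  unfold en1
  rw [show n + 2 = (n+1)+1 from rfl, Finset.sum_Ico_succ_top (by omega),
    Finset.sum_Ico_succ_top (by omega), Finset.sum_range_succ, Finset.sum_range_succ]
  simp only [Nat.add_sub_cancel]
  ring

lemma en1_const (g : ℝ → ℝ) (β z : ℝ) (k : ℕ) :
    en1 g β k (fun _ => z) = k * g z := by
  simp [en1, Finset.sum_const, mul_comm]

lemma not_even (m : ℕ) : ¬ Even (2*m+1) := by
  simp [Nat.even_iff, Nat.add_mod, Nat.mul_mod]

lemma en1_lower (g : ℝ → ℝ) (β z : ℝ) (hz : z = 1 ∨ z = -1) :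
    ∀ k : ℕ, 1 ≤ k → ∀ v : ℕ → ℝ, (∀ i < 2*k, v i = 1 ∨ v i = -1) →
    (∀ i < 2*k, Odd i → v i = z) →
    (k : ℝ) * g z + min (g z) (g (-z) + β) + ((k:ℝ) - 1) * min (g z) (g (-z) + 2*β)
      ≤ en1 g β (2*k) v := by
  intro k hk
  induction k, hk using Nat.le_induction with
  | base =>
    intro v h1 h2
    have hv1 : v 1 = z := h2 1 (by omega) ⟨0, by omega⟩
    have hv0 : v 0 = z ∨ v 0 = -z := by
      rcases h1 0 (by omega) with h|h <;> rcases hz with h'|h' <;> norm_num [h, h']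
    rw [show 2*1 = 2 from rfl, en1_two g β, hv1]
    rcases hv0 with h|h <;> rw [h]
    · push_cast
      nlinarith [min_le_left (g z) (g (-z) + β)]
    · have h4 : (z - -z)^2 = (4:ℝ) := by rcases hz with h'|h' <;> norm_num [h']
      rw [h4]
      push_cast
      nlinarith [min_le_right (g z) (g (-z) + β)]
  | succ k hk ih =>
    intro v h1 h2
    obtain ⟨j, rfl⟩ : ∃ j, k = j + 1 := ⟨k-1, by omega⟩
    have key := ih v (fun i hi => h1 i (by omega)) (fun i hi ho => h2 i (by omega) ho)
    rw [show 2*(j+1+1) = 2*(j+1) + 2 by ring, en1_rec g β _ (by omega)]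
    have hodd1 : v (2*(j+1) - 1) = z := h2 _ (by omega) (Nat.odd_iff.mpr (by omega))
    have hodd2 : v (2*(j+1) + 1) = z := h2 _ (by omega) (Nat.odd_iff.mpr (by omega))
    have hv : v (2*(j+1)) = z ∨ v (2*(j+1)) = -z := by
      rcases h1 (2*(j+1)) (by omega) with h|h <;> rcases hz with h'|h' <;> norm_num [h, h']
    rw [hodd1, hodd2]
    rcases hv with h|h <;> rw [h]
    · simp only [sub_self]
      push_cast at key ⊢
      nlinarith [min_le_left (g z) (g (-z) + 2*β)]
    · have h4 : (z - -z)^2 = (4:ℝ) := by rcases hz with h'|h' <;> norm_num [h']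
      have h4' : (-z - z)^2 = (4:ℝ) := by rcases hz with h'|h' <;> norm_num [h']
      rw [h4, h4']
      push_cast at key ⊢
      nlinarith [min_le_right (g z) (g (-z) + 2*β)]

lemma en1_alt (g : ℝ → ℝ) (β z : ℝ) (hz : z = 1 ∨ z = -1) :
    ∀ k : ℕ, 1 ≤ k → en1 g β (2*k) (fun i => if Even i then -z else z)
      = (k:ℝ) * g z + (k:ℝ) * g (-z) + (2*(k:ℝ) - 1) * β := by
  intro k hk
  have h4 : (z - -z)^2 = (4:ℝ) := by rcases hz with h'|h' <;> norm_num [h']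
  have h4' : (-z - z)^2 = (4:ℝ) := by rcases hz with h'|h' <;> norm_num [h']
  induction k, hk using Nat.le_induction with
  | base =>
    rw [show 2*1 = 2 from rfl, en1_two]
    have e0 : (if Even 0 then -z else z) = -z := if_pos Even.zero
    have e1 : (if Even 1 then -z else z) = z := if_neg (by simp [Nat.even_iff])
    rw [e0, e1, h4]
    push_cast; ring
  | succ k hk ih =>
    rw [show 2*(k+1) = 2*k + 2 by ring, en1_rec g β _ (by omega)]
    have e1 : (if Even (2*k) then -z else z) = -z := if_pos ⟨k, by ring⟩
    have e2 : (if Even (2*k+1) then -z else z) = z := if_neg (not_even k)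
    have e3 : (if Even (2*k-1) then -z else z) = z := by
      obtain ⟨j, rfl⟩ : ∃ j, k = j + 1 := ⟨k-1, by omega⟩
      rw [show 2*(j+1) - 1 = 2*j+1 by omega]
      exact if_neg (not_even j)
    rw [e1, e2, e3, h4, h4', ih]
    push_cast; ring

open DP1 in
/-- the limit `φ(z) = lim_{M→∞, M even} φ_M(z)` exists and equals
`g(z) - (1/2) max{0, g(z) - g(-z) - 2β}`, equivalently
`(1/2) g(z) + (1/2) min{g(z), g(-z) + 2β}`. -/
theorem phi1_limit (g : ℝ → ℝ) (β z : ℝ) (hz : z = 1 ∨ z = -1) :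
    Filter.Tendsto (fun M : ℕ => phi1 g β z M)
      (Filter.atTop ⊓ Filter.principal {M | Even M})
      (nhds (g z - 1 / 2 * max 0 (g z - g (-z) - 2 * β)))
    ∧ g z - 1 / 2 * max 0 (g z - g (-z) - 2 * β)
        = 1 / 2 * g z + 1 / 2 * min (g z) (g (-z) + 2 * β) := by
  have eq2 : g z - 1 / 2 * max 0 (g z - g (-z) - 2 * β)
      = 1 / 2 * g z + 1 / 2 * min (g z) (g (-z) + 2 * β) := by
    rcases le_total (g z) (g (-z) + 2*β) with h|h
    · rw [min_eq_left h, max_eq_left (by linarith)]; ring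
    · rw [min_eq_right h, max_eq_right (by linarith)]; ring
  refine ⟨?_, eq2⟩
  rw [eq2]
  set L : ℝ := 1 / 2 * g z + 1 / 2 * min (g z) (g (-z) + 2 * β) with hL
  set m1 : ℝ := min (g z) (g (-z) + β) with hm1
  set lo : ℕ → ℝ := fun M => L + (m1 - min (g z) (g (-z) + 2*β)) / M with hlo
  set hi : ℕ → ℝ := fun M => min (g z) ((g z + g (-z)) / 2 + β - β / M) with hhi
  -- limits of bounds
  have hlo_t : Filter.Tendsto lo Filter.atTop (nhds L) := by
    have h := Filter.Tendsto.add (tendsto_const_nhds (x := L) (f := Filter.atTop (α := ℕ)))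
      (tendsto_const_div_atTop_nhds_zero_nat (m1 - min (g z) (g (-z) + 2*β)))
    simpa using h
  have hhi_t : Filter.Tendsto hi Filter.atTop (nhds L) := by
    have h1 : Filter.Tendsto (fun M : ℕ => (g z + g (-z)) / 2 + β - β / M)
        Filter.atTop (nhds ((g z + g (-z)) / 2 + β - 0)) :=
      Filter.Tendsto.sub tendsto_const_nhds (tendsto_const_div_atTop_nhds_zero_nat β)
    have h2 := Filter.Tendsto.min
      (tendsto_const_nhds (x := g z) (f := Filter.atTop (α := ℕ))) h1
    have h3 : min (g z) ((g z + g (-z)) / 2 + β - 0) = L := by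
      rcases le_total (g z) (g (-z) + 2*β) with h|h
      · rw [hL, min_eq_left h, min_eq_left (by linarith)]; ring
      · rw [hL, min_eq_right h, min_eq_right (by linarith)]; ring
    rw [h3] at h2
    exact h2
  -- eventual bounds
  have hbound : ∀ k : ℕ, 1 ≤ k →
      lo (2*k) ≤ phi1 g β z (2*k) ∧ phi1 g β z (2*k) ≤ hi (2*k) := by
    intro k hk
    set S : Set (ℕ → ℝ) :=
      {v : ℕ → ℝ | (∀ i < 2*k, v i = 1 ∨ v i = -1) ∧ ∀ i < 2*k, Odd i → v i = z} with hS
    have hmem_const : (fun _ : ℕ => z) ∈ S := ⟨fun i _ => hz, fun i _ _ => rfl⟩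
    have hmem_alt : (fun i : ℕ => if Even i then -z else z) ∈ S := by
      constructor
      · intro i _
        rcases hz with h|h <;> by_cases he : Even i <;> simp [he, h]
      · intro i _ hi
        simp [Nat.not_even_iff_odd.mpr hi]
    set E : Set ℝ := en1 g β (2*k) '' S with hE
    have hEne : E.Nonempty := ⟨_, Set.mem_image_of_mem _ hmem_const⟩
    have hlb : ∀ x ∈ E, (k:ℝ) * g z + m1 + ((k:ℝ) - 1) * min (g z) (g (-z) + 2*β) ≤ x := by
      rintro x ⟨v, ⟨hv1, hv2⟩, rfl⟩
      exact en1_lower g β z hz k hk v hv1 hv2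
    have hBdd : BddBelow E := ⟨_, fun x hx => hlb x hx⟩
    have hInf_lb : (k:ℝ) * g z + m1 + ((k:ℝ) - 1) * min (g z) (g (-z) + 2*β) ≤ sInf E :=
      le_csInf hEne hlb
    have hInf_le1 : sInf E ≤ (2*k : ℕ) * g z := by
      have h := csInf_le hBdd (Set.mem_image_of_mem _ hmem_const)
      rwa [en1_const] at h
    have hInf_le2 : sInf E ≤ (k:ℝ) * g z + (k:ℝ) * g (-z) + (2*(k:ℝ) - 1) * β := by
      have h := csInf_le hBdd (Set.mem_image_of_mem _ hmem_alt)
      rwa [en1_alt g β z hz k hk] at h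
    have hphi : phi1 g β z (2*k) = sInf E / ((2*k : ℕ) : ℝ) := rfl
    have hkpos : (0:ℝ) < ((2*k : ℕ) : ℝ) := by
      have : 0 < 2*k := by omega
      exact_mod_cast this
    have hkne : ((2*k : ℕ) : ℝ) ≠ 0 := ne_of_gt hkpos
    have hkR : ((2*k : ℕ) : ℝ) = 2 * (k:ℝ) := by push_cast; ring
    constructor
    · have heq : lo (2*k) =
          ((k:ℝ) * g z + m1 + ((k:ℝ) - 1) * min (g z) (g (-z) + 2*β)) / ((2*k : ℕ) : ℝ) := by
        rw [hlo, hL]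
        field_simp [hkR]
        push_cast
        ring
      rw [heq, hphi]
      gcongr
    · rw [hphi, hhi]
      refine le_min ?_ ?_
      · calc sInf E / ((2*k : ℕ) : ℝ) ≤ ((2*k : ℕ) * g z) / ((2*k : ℕ) : ℝ) := by gcongr
          _ = g z := by field_simp
      · calc sInf E / ((2*k : ℕ) : ℝ)
            ≤ ((k:ℝ) * g z + (k:ℝ) * g (-z) + (2*(k:ℝ) - 1) * β) / ((2*k : ℕ) : ℝ) := by gcongr
          _ = (g z + g (-z)) / 2 + β - β / ((2*k : ℕ) : ℝ) := by
              field_simp [hkR]; push_cast; ring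
  have hev : ∀ᶠ M in (Filter.atTop ⊓ Filter.principal {M | Even M}),
      lo M ≤ phi1 g β z M ∧ phi1 g β z M ≤ hi M := by
    rw [Filter.eventually_inf_principal]
    filter_upwards [Filter.eventually_ge_atTop 2] with M hM hEven
    have h2 : M % 2 = 0 := Nat.even_iff.mp hEven
    obtain ⟨k, rfl⟩ : ∃ k, M = 2*k := ⟨M/2, by omega⟩
    exact hbound k (by omega)
  exact tendsto_of_tendsto_of_tendsto_of_le_of_le'
    (hlo_t.mono_left inf_le_left) (hhi_t.mono_left inf_le_left)
    (hev.mono fun M h => h.1) (hev.mono fun M h => h.2)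
end
end
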